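/- arXiv:0711.4151 — 2 statements merged into one kernel-verified Lean document; each statement's English description precedes it below -/
import Mathlib

section
/- Suppose mn is even. The dimension of the perfect matching polytope P_T(m,n) of the m×n torus graph satisfies: (a) if n > 2 is even then dim P_T(1,n) = 1; (b) if n > 2 is even then dim P_T(2,n) = n + 1; (c) if n > 1 is odd then dim P_T(2,n) = n; (d) if m > 2 and n > 2 are both even then dim P_T(m,n) = mn + 1; (e) if m > 2 is even and n > 1 is odd then dim P_T(m,n) = mn. -/
open Finset Pointwise

/-- The perfect matching polytope of a graph `G`: the convex hull in `ℝ^{Sym2 V}`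
of the 0/1 incidence vectors of the perfect matchings of `G`. -/
noncomputable def pmPolytope {V : Type*} (G : SimpleGraph V) : Set (Sym2 V → ℝ) :=
  convexHull ℝ
    {x | ∃ M : G.Subgraph, M.IsPerfectMatching ∧ x = Set.indicator M.edgeSet 1}

/-- The number of lattice points in the dilate `t • P`. -/
noncomputable def latticeCount {ι : Type*} (P : Set (ι → ℝ)) (t : ℕ) : ℕ :=
  Nat.card {x : ι → ℤ // (fun i => (x i : ℝ)) ∈ (t : ℝ) • P}

/-- The number of lattice points in the relative interior of the dilate `t • P`. -/
noncomputable def interiorLatticeCount {ι : Type*} (P : Set (ι → ℝ)) (t : ℕ) : ℕ :=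
  Nat.card {x : ι → ℤ // (fun i => (x i : ℝ)) ∈ intrinsicInterior ℝ ((t : ℝ) • P)}

/-- A polytope `P` is Gorenstein of index `k` if `L_{P°}(t) = 0` for `0 < t < k`
and `L_{P°}(t) = L_P(t - k)` for all `t ≥ k`. -/
def IsGorensteinOfIndex {ι : Type*} (P : Set (ι → ℝ)) (k : ℕ) : Prop :=
  (∀ t : ℕ, 0 < t → t < k → interiorLatticeCount P t = 0) ∧
  ∀ t : ℕ, k ≤ t → interiorLatticeCount P t = latticeCount P (t - k)

/-- The `m × n` grid graph: vertices `(i, j)` with `0 ≤ i < n`, `0 ≤ j < m`,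
adjacent iff `|i - i'| + |j - j'| = 1`. -/
def gridGraph (m n : ℕ) : SimpleGraph (Fin n × Fin m) where
  Adj p q := Nat.dist p.1.val q.1.val + Nat.dist p.2.val q.2.val = 1
  symm := by
    refine ⟨?_⟩
    intro p q h
    simpa [Nat.dist_comm] using h
  loopless := by
    refine ⟨?_⟩
    intro p h
    simp [Nat.dist_self] at h

/-- The `m × n` torus graph: the grid graph together with the wrap-around edges
`{(0,j),(n-1,j)}` and `{(i,0),(i,m-1)}`. -/
def torusGraph (m n : ℕ) : SimpleGraph (Fin n × Fin m) where
  Adj p q := p ≠ q ∧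
    (Nat.dist p.1.val q.1.val + Nat.dist p.2.val q.2.val = 1 ∨
     (p.2 = q.2 ∧ ((p.1.val = 0 ∧ q.1.val = n - 1) ∨ (p.1.val = n - 1 ∧ q.1.val = 0))) ∨
     (p.1 = q.1 ∧ ((p.2.val = 0 ∧ q.2.val = m - 1) ∨ (p.2.val = m - 1 ∧ q.2.val = 0))))
  symm := by
    refine ⟨?_⟩
    rintro p q ⟨hne, h⟩
    refine ⟨hne.symm, ?_⟩
    rcases h with h | ⟨h1, h2⟩ | ⟨h1, h2⟩
    · exact Or.inl (by simpa [Nat.dist_comm] using h)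
    · exact Or.inr (Or.inl ⟨h1.symm, by tauto⟩)
    · exact Or.inr (Or.inr ⟨h1.symm, by tauto⟩)
  loopless := ⟨fun p h => h.1 rfl⟩

/-- A magic labelling of sum `t` of a graph `G`: a nonnegative integer label on each
edge (zero on non-edges) such that at every vertex the incident labels sum to `t`. -/
def IsMagicLabelling {V : Type*} [Fintype V] [DecidableEq V]
    (G : SimpleGraph V) (x : Sym2 V → ℕ) (t : ℕ) : Prop :=
  (∀ e, e ∉ G.edgeSet → x e = 0) ∧
  ∀ v : V, ∑ e ∈ Finset.univ.filter (fun e : Sym2 V => v ∈ e), x e = t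

/-- `T m n t` is the number of magic labellings of sum `t` of the grid graph `G(m,n)`. -/
noncomputable def T (m n t : ℕ) : ℕ :=
  Nat.card {x : Sym2 (Fin n × Fin m) → ℕ // IsMagicLabelling (gridGraph m n) x t}

/-- The dimension of a polytope: the dimension of its affine hull. -/
noncomputable def polytopeDim {ι : Type*} (P : Set (ι → ℝ)) : ℕ :=
  Module.finrank ℝ (vectorSpan ℝ P)

/-- `(h 0, …, h k)` is the Ehrhart h-vector of a `d`-dimensional integral polytope `P`:
`∑_{t ≥ 0} L_P(t) z^t = (h_0 + h_1 z + ⋯ + h_k z^k)/(1 - z)^{d+1}` with `h k ≠ 0`,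
expressed coefficientwise via `1/(1-z)^{d+1} = ∑_t C(t+d, d) z^t`. -/
def IsEhrhartHVector {ι : Type*} (P : Set (ι → ℝ)) (d : ℕ) (h : ℕ → ℤ) (k : ℕ) : Prop :=
  h k ≠ 0 ∧ (∀ j, k < j → h j = 0) ∧
  ∀ t : ℕ, (latticeCount P t : ℤ) =
    ∑ j ∈ Finset.range (k + 1), h j * ((t + d - j).choose d : ℤ)

/-- A finite sequence `h 0, …, h k` is unimodal. -/
def UnimodalVec (h : ℕ → ℤ) (k : ℕ) : Prop :=
  ∃ j, j ≤ k ∧ (∀ i, i < j → h i ≤ h (i + 1)) ∧ (∀ i, j ≤ i → i < k → h (i + 1) ≤ h i)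

/-!
The vector span of the perfect matching polytope lies in the space of edge weightings supported on
the graph with zero sum at every vertex. On the torus such a weighting is pinned down by the vertex
equations once it vanishes on one vertical edge per column and on the horizontal edges off row `0`:
each column then alternates from its known edge, and row `0` satisfies `x i + x (i - 1) = 0` around
a cycle of length `n`, which forces `0` for odd `n` and leaves one free value for even `n` (for
`m ≤ 2` the vertical edges degenerate and fewer coordinates suffice). Matching this count,
differences of explicit perfect matchings are independent: turning the two vertical pairs of a unit
square horizontal gives its alternating 4-cycle, and for even sides shifting the pairs of row `0` or
column `0` by one step supplies the remaining directions.
-/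

lemma Function.Involutive.ite {α : Type*} {f g : α → α} {s : α → Prop} [DecidablePred s]
    (hf : Function.Involutive f) (hg : Function.Involutive g)
    (hfs : ∀ a, s a → s (f a)) (hgs : ∀ a, s a → s (g a)) :
    Function.Involutive fun a => if s a then f a else g a := by
  intro a
  by_cases ha : s a
  · simp [ha, hfs a ha, hf a]
  · have hga : ¬ s (g a) := fun h => ha (hg a ▸ hgs _ h)
    simp [ha, hga, hg a]

lemma Even.one_lt {k : ℕ} [NeZero k] (hk : Even k) : 1 < k := by
  obtain ⟨l, rfl⟩ := hk
  have := NeZero.ne (l + l)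
  omega

namespace SimpleGraph

variable {V : Type*} {G : SimpleGraph V}

noncomputable def pairingVec (σ : V → V) : Sym2 V → ℝ :=
  Set.indicator (Set.range fun v => s(v, σ v)) 1

lemma pairingVec_mk [DecidableEq V] {σ : V → V} (hσ : Function.Involutive σ) (v w : V) :
    pairingVec σ s(v, w) = if σ v = w then 1 else 0 := by
  have : s(v, w) ∈ Set.range (fun u => s(u, σ u)) ↔ σ v = w := by
    refine ⟨?_, fun h => ⟨v, h ▸ rfl⟩⟩
    rintro ⟨u, hu⟩
    rcases Sym2.eq_iff.mp hu with ⟨rfl, rfl⟩ | ⟨rfl, rfl⟩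
    exacts [rfl, hσ u]
  by_cases h : σ v = w <;> simp [pairingVec, this, h]

def Subgraph.ofInvolution (σ : V → V) (hσ : Function.Involutive σ)
    (hadj : ∀ v, G.Adj v (σ v)) : G.Subgraph where
  verts := Set.univ
  Adj v w := σ v = w
  adj_sub := by rintro v _ rfl; exact hadj v
  edge_vert _ := Set.mem_univ _
  symm := ⟨fun _ _ h => h ▸ hσ _⟩

lemma Subgraph.isPerfectMatching_ofInvolution {σ : V → V} (hσ : Function.Involutive σ)
    (hadj : ∀ v, G.Adj v (σ v)) : (Subgraph.ofInvolution σ hσ hadj).IsPerfectMatching :=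
  Subgraph.isPerfectMatching_iff.mpr fun _ => existsUnique_eq'

lemma Subgraph.indicator_edgeSet_ofInvolution {σ : V → V} (hσ : Function.Involutive σ)
    (hadj : ∀ v, G.Adj v (σ v)) :
    Set.indicator (Subgraph.ofInvolution σ hσ hadj).edgeSet 1 = pairingVec σ := by
  classical
  ext e
  induction e with
  | h v w => rw [pairingVec_mk hσ, Set.indicator_apply]; rfl

lemma indicator_sub_indicator_mem_vectorSpan {M N : G.Subgraph} (hM : M.IsPerfectMatching)
    (hN : N.IsPerfectMatching) :
    Set.indicator M.edgeSet 1 - Set.indicator N.edgeSet 1 ∈ vectorSpan ℝ (pmPolytope G) :=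
  vsub_mem_vectorSpan ℝ (subset_convexHull ℝ _ ⟨M, hM, rfl⟩)
    (subset_convexHull ℝ _ ⟨N, hN, rfl⟩)

lemma pairingVec_sub_mem_vectorSpan {σ τ : V → V}
    (hσ : Function.Involutive σ) (hσG : ∀ v, G.Adj v (σ v))
    (hτ : Function.Involutive τ) (hτG : ∀ v, G.Adj v (τ v)) :
    pairingVec σ - pairingVec τ ∈ vectorSpan ℝ (pmPolytope G) := by
  simpa only [Subgraph.indicator_edgeSet_ofInvolution] using
    indicator_sub_indicator_mem_vectorSpan (Subgraph.isPerfectMatching_ofInvolution hσ hσG)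
      (Subgraph.isPerfectMatching_ofInvolution hτ hτG)

variable [Fintype V] [DecidableEq V]

variable (G) in
def balancedWeightings : Submodule ℝ (Sym2 V → ℝ) where
  carrier := {x | (∀ e ∉ G.edgeSet, x e = 0) ∧ ∀ v, ∑ e with v ∈ e, x e = 0}
  add_mem' := by
    rintro x y ⟨hx, hx'⟩ ⟨hy, hy'⟩
    exact ⟨fun e he => by simp [hx e he, hy e he],
      fun v => by simp [Finset.sum_add_distrib, hx' v, hy' v]⟩
  zero_mem' := ⟨fun _ _ => rfl, fun _ => by simp⟩
  smul_mem' := by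
    rintro c x ⟨hx, hx'⟩
    exact ⟨fun e he => by simp [hx e he], fun v => by simp [← Finset.mul_sum, hx' v]⟩

lemma sum_indicator_edgeSet_of_isPerfectMatching {M : G.Subgraph} (hM : M.IsPerfectMatching)
    (v : V) : ∑ e with v ∈ e, Set.indicator M.edgeSet (1 : Sym2 V → ℝ) e = 1 := by
  classical
  obtain ⟨w, hvw, hw⟩ := Subgraph.isPerfectMatching_iff.mp hM v
  rw [Finset.sum_indicator_eq_sum_filter, Finset.sum_eq_single_of_mem s(v, w)]
  · simp
  · simpa using hvw
  · simp only [Finset.mem_filter, Finset.mem_univ, true_and, and_imp]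
    intro e hve heM hne
    induction e with
    | h a b =>
      rcases Sym2.mem_iff.mp hve with rfl | rfl
      · exact absurd (by rw [hw b heM]) hne
      · exact absurd (by rw [hw a heM.symm, Sym2.eq_swap]) hne

lemma vectorSpan_pmPolytope_le : vectorSpan ℝ (pmPolytope G) ≤ G.balancedWeightings := by
  rw [pmPolytope, ← direction_affineSpan, affineSpan_convexHull, direction_affineSpan,
    vectorSpan_def, Submodule.span_le]
  rintro _ ⟨_, ⟨M, hM, rfl⟩, _, ⟨N, hN, rfl⟩, rfl⟩
  refine ⟨fun e he => ?_, fun v => ?_⟩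
  · have hM' : e ∉ M.edgeSet := fun h => he (M.edgeSet_subset h)
    have hN' : e ∉ N.edgeSet := fun h => he (N.edgeSet_subset h)
    simp [hM', hN']
  · simp [Finset.sum_sub_distrib, sum_indicator_edgeSet_of_isPerfectMatching hM,
      sum_indicator_edgeSet_of_isPerfectMatching hN]

theorem polytopeDim_pmPolytope_eq_card {ι : Type*} [Fintype ι] (c : ι → Sym2 V)
    (hc : ∀ x ∈ G.balancedWeightings, (∀ k, x (c k) = 0) → x = 0)
    (d : ι → Sym2 V → ℝ) (hd : ∀ k, d k ∈ vectorSpan ℝ (pmPolytope G))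
    (hli : LinearIndependent ℝ d) : polytopeDim (pmPolytope G) = Fintype.card ι := by
  refine le_antisymm ?_ ?_
  · let φ : G.balancedWeightings →ₗ[ℝ] ι → ℝ :=
      (LinearMap.pi fun k => LinearMap.proj (c k)).comp G.balancedWeightings.subtype
    have hφ : Function.Injective φ := by
      rw [← LinearMap.ker_eq_bot, LinearMap.ker_eq_bot']
      exact fun x hx => Subtype.ext (hc x x.2 fun k => congrFun hx k)
    calc polytopeDim (pmPolytope G) ≤ Module.finrank ℝ G.balancedWeightings :=
          Submodule.finrank_mono vectorSpan_pmPolytope_le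
      _ ≤ Fintype.card ι := by
          simpa using LinearMap.finrank_le_finrank_of_injective hφ
  · exact (LinearIndependent.of_comp (vectorSpan ℝ (pmPolytope G)).subtype
      (v := fun k => (⟨d k, hd k⟩ : vectorSpan ℝ (pmPolytope G))) hli).fintype_card_le_finrank

end SimpleGraph

namespace Fin

variable {n : ℕ} [NeZero n]

lemma val_add_one_eq_ite (i : Fin n) : (i + 1).val = if i.val + 1 = n then 0 else i.val + 1 := by
  rw [Fin.val_add, Fin.val_one']
  have := i.isLt
  rcases Nat.lt_or_ge 1 n with h | h
  · rw [Nat.mod_eq_of_lt h]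
    split_ifs with h'
    · rw [h', Nat.mod_self]
    · exact Nat.mod_eq_of_lt (by omega)
  · obtain rfl : n = 1 := by have := NeZero.ne n; omega
    simp

lemma val_sub_one_eq_ite (i : Fin n) : (i - 1).val = if i.val = 0 then n - 1 else i.val - 1 := by
  have h := val_add_one_eq_ite (i - 1)
  have := (i - 1).isLt
  rw [sub_add_cancel] at h
  split_ifs at h ⊢ <;> omega

lemma add_one_ne_self (hn : 1 < n) (i : Fin n) : i + 1 ≠ i := by
  rw [Ne, Fin.ext_iff, val_add_one_eq_ite]; split_ifs <;> omega

lemma sub_one_ne_self (hn : 1 < n) (i : Fin n) : i - 1 ≠ i := by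
  simpa using (add_one_ne_self hn (i - 1)).symm

lemma sub_one_ne_add_one (hn : 2 < n) (i : Fin n) : i - 1 ≠ i + 1 := by
  rw [Ne, Fin.ext_iff, val_add_one_eq_ite, val_sub_one_eq_ite]; split_ifs <;> omega

lemma val_add_one_mod_two_ne (hn : Even n) (i : Fin n) : (i + 1).val % 2 ≠ i.val % 2 := by
  obtain ⟨k, rfl⟩ := hn
  rw [val_add_one_eq_ite]; split_ifs <;> omega

lemma eq_add_one_or_eq_sub_one {a b : Fin n}
    (h : Nat.dist a b = 1 ∨ (a.val = 0 ∧ b.val = n - 1) ∨ (a.val = n - 1 ∧ b.val = 0)) :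
    b = a + 1 ∨ b = a - 1 := by
  have := a.isLt; have := b.isLt
  rw [Fin.ext_iff, Fin.ext_iff, val_add_one_eq_ite, val_sub_one_eq_ite]
  unfold Nat.dist at h
  split_ifs <;> omega

lemma apply_eq_neg_one_pow_mul {c : Fin n → ℝ} (h : ∀ i ≠ 0, c i + c (i - 1) = 0)
    (i : Fin n) :
    c i = (-1) ^ i.val * c 0 := by
  induction hk : i.val generalizing i with
  | zero => rw [show i = 0 from Fin.ext hk]; simp
  | succ k ih =>
    have hi : i ≠ 0 := by rintro rfl; simp at hk
    rw [eq_neg_of_add_eq_zero_left (h i hi),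
      ih (i - 1) (by rw [val_sub_one_of_ne_zero hi, hk]; rfl), pow_succ]
    ring

lemma forall_eq_zero_of_apply_zero {c : Fin n → ℝ} (h : ∀ i ≠ 0, c i + c (i - 1) = 0)
    (h0 : c 0 = 0) (i : Fin n) : c i = 0 := by
  rw [apply_eq_neg_one_pow_mul h, h0, mul_zero]

lemma apply_zero_eq_zero_of_odd (hn : Odd n) {c : Fin n → ℝ} (h : ∀ i, c i + c (i - 1) = 0) :
    c 0 = 0 := by
  have hlast := apply_eq_neg_one_pow_mul (fun i _ => h i) (0 - 1)
  rw [val_sub_one_eq_ite, val_zero, if_pos rfl, (Nat.Odd.sub_odd hn odd_one).neg_one_pow,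
    one_mul] at hlast
  linarith [h 0]

def cyclePartner (c : ℕ) (j : Fin n) : Fin n := if j.val % 2 = c % 2 then j + 1 else j - 1

lemma cyclePartner_self (j : Fin n) : cyclePartner j.val j = j + 1 := if_pos rfl

lemma cyclePartner_add_one (hn : Even n) (j : Fin n) : cyclePartner j.val (j + 1) = j := by
  rw [cyclePartner, if_neg (val_add_one_mod_two_ne hn j), add_sub_cancel_right]

lemma cyclePartner_involutive (hn : Even n) (c : ℕ) :
    Function.Involutive (cyclePartner c : Fin n → Fin n) := by
  intro j
  have h1 := val_add_one_mod_two_ne hn j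
  have h2 := val_add_one_mod_two_ne hn (j - 1)
  rw [sub_add_cancel] at h2
  by_cases h : j.val % 2 = c % 2
  · rw [show cyclePartner c j = j + 1 from if_pos h, cyclePartner, if_neg (by omega),
      add_sub_cancel_right]
  · rw [show cyclePartner c j = j - 1 from if_neg h, cyclePartner, if_pos (by omega),
      sub_add_cancel]

end Fin

namespace torusGraph

open SimpleGraph

variable {m n : ℕ} [NeZero m] [NeZero n]

omit [NeZero m] in
lemma adj_add_one_fst (hn : 1 < n) (i : Fin n) (j : Fin m) :
    (torusGraph m n).Adj (i, j) (i + 1, j) := by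
  have h := Fin.val_add_one_eq_ite i
  refine ⟨fun hc => Fin.add_one_ne_self hn i (congrArg Prod.fst hc).symm, ?_⟩
  simp only [Nat.dist_self, add_zero, true_and]
  unfold Nat.dist
  split_ifs at h <;> omega

omit [NeZero n] in
lemma adj_add_one_snd (hm : 1 < m) (i : Fin n) (j : Fin m) :
    (torusGraph m n).Adj (i, j) (i, j + 1) := by
  have h := Fin.val_add_one_eq_ite j
  refine ⟨fun hc => Fin.add_one_ne_self hm j (congrArg Prod.snd hc).symm, ?_⟩
  simp only [Nat.dist_self, zero_add, true_and]
  unfold Nat.dist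
  split_ifs at h <;> omega

lemma eq_of_adj {i : Fin n} {j : Fin m} {q : Fin n × Fin m} (h : (torusGraph m n).Adj (i, j) q) :
    q = (i + 1, j) ∨ q = (i - 1, j) ∨ q = (i, j + 1) ∨ q = (i, j - 1) := by
  obtain ⟨a, b⟩ := q
  obtain ⟨-, hd | ⟨rfl, hw⟩ | ⟨rfl, hw⟩⟩ := h <;> dsimp only at *
  · simp only [Prod.mk.injEq]
    rcases Nat.eq_zero_or_pos (Nat.dist i a) with hi | hi
    · have hia : i = a := Fin.ext (Nat.eq_of_dist_eq_zero hi)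
      subst hia
      rcases Fin.eq_add_one_or_eq_sub_one (a := j) (b := b) (Or.inl (by omega)) with h | h <;>
        simp [h]
    · have hjb : j = b := Fin.ext (Nat.eq_of_dist_eq_zero (by omega))
      subst hjb
      rcases Fin.eq_add_one_or_eq_sub_one (a := i) (b := a) (Or.inl (by omega)) with h | h <;>
        simp [h]
  · rcases Fin.eq_add_one_or_eq_sub_one (Or.inr hw) with h | h <;> simp [h]
  · rcases Fin.eq_add_one_or_eq_sub_one (Or.inr hw) with h | h <;> simp [h]

omit [NeZero m] in
lemma adj_sub_one_fst (hn : 1 < n) (i : Fin n) (j : Fin m) :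
    (torusGraph m n).Adj (i, j) (i - 1, j) := by
  simpa using (adj_add_one_fst hn (i - 1) j).symm

omit [NeZero n] in
lemma adj_sub_one_snd (hm : 1 < m) (i : Fin n) (j : Fin m) :
    (torusGraph m n).Adj (i, j) (i, j - 1) := by
  simpa using (adj_add_one_snd hm i (j - 1)).symm

def hEdge (i : Fin n) (j : Fin m) : Sym2 (Fin n × Fin m) := s((i, j), (i + 1, j))

def vEdge (i : Fin n) (j : Fin m) : Sym2 (Fin n × Fin m) := s((i, j), (i, j + 1))

lemma mem_of_mem_edgeSet {i : Fin n} {j : Fin m} {e : Sym2 (Fin n × Fin m)}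
    (he : e ∈ (torusGraph m n).edgeSet) (hij : (i, j) ∈ e) :
    e = hEdge (i - 1) j ∨ e = hEdge i j ∨ e = vEdge i (j - 1) ∨ e = vEdge i j := by
  obtain ⟨q, rfl⟩ := Sym2.mem_iff_exists.mp hij
  rcases eq_of_adj he with rfl | rfl | rfl | rfl <;>
    simp [hEdge, vEdge, Sym2.eq_swap]

variable {x : Sym2 (Fin n × Fin m) → ℝ}

lemma sum_incident_eq_zero (hx : x ∈ (torusGraph m n).balancedWeightings) (i : Fin n)
    (j : Fin m) :
    ∑ e ∈ {hEdge (i - 1) j, hEdge i j, vEdge i (j - 1), vEdge i j}, x e = 0 := by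
  rw [← hx.2 (i, j)]
  refine Finset.sum_subset (fun e he => ?_) fun e he he' => ?_
  · simp only [Finset.mem_insert, Finset.mem_singleton] at he
    rcases he with rfl | rfl | rfl | rfl <;> simp [hEdge, vEdge]
  · by_contra hxe
    simp only [Finset.mem_filter, Finset.mem_univ, true_and] at he
    simpa using he' (by simpa using mem_of_mem_edgeSet (by_contra fun h => hxe (hx.1 e h)) he)

lemma eq_zero_of_forall_hEdge_vEdge (hx : x ∈ (torusGraph m n).balancedWeightings)
    (hh : ∀ i j, x (hEdge i j) = 0) (hv : ∀ i j, x (vEdge i j) = 0) : x = 0 := by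
  ext e
  by_contra hxe
  have he : e ∈ (torusGraph m n).edgeSet := by_contra fun h => hxe (hx.1 e h)
  induction e with
  | h p q =>
    rcases mem_of_mem_edgeSet he (Sym2.mem_mk_left p q) with h | h | h | h <;>
      simp [h, hh, hv] at hxe

lemma hEdge_ne_vEdge (hn : 1 < n) (i i' : Fin n) (j j' : Fin m) : hEdge i j ≠ vEdge i' j' := by
  intro h
  rcases Sym2.eq_iff.mp h with ⟨h1, h2⟩ | ⟨h1, h2⟩ <;>
    exact Fin.add_one_ne_self hn i ((congrArg Prod.fst h2).trans (congrArg Prod.fst h1).symm)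

omit [NeZero m] in
lemma hEdge_sub_one_ne (hn : 2 < n) (i : Fin n) (j : Fin m) : hEdge (i - 1) j ≠ hEdge i j := by
  simp [hEdge, Fin.sub_one_ne_add_one hn, (Fin.add_one_ne_self (n := n) (by omega) i).symm]

omit [NeZero n] in
lemma vEdge_sub_one_ne (hm : 2 < m) (i : Fin n) (j : Fin m) : vEdge i (j - 1) ≠ vEdge i j := by
  simp [vEdge, Fin.sub_one_ne_add_one hm, (Fin.add_one_ne_self (n := m) (by omega) j).symm]

lemma vertex_eq (hm : 2 < m) (hn : 2 < n) (hx : x ∈ (torusGraph m n).balancedWeightings)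
    (i : Fin n) (j : Fin m) :
    x (hEdge i j) + x (hEdge (i - 1) j) + (x (vEdge i j) + x (vEdge i (j - 1))) = 0 := by
  have h := sum_incident_eq_zero hx i j
  rw [Finset.sum_insert (by simp [hEdge_sub_one_ne hn, hEdge_ne_vEdge (by omega : 1 < n)]),
    Finset.sum_insert (by simp [hEdge_ne_vEdge (by omega : 1 < n)]),
    Finset.sum_pair (vEdge_sub_one_ne hm i j)] at h
  linarith

omit [NeZero n] in
lemma vEdge_eq_vEdge_zero (i : Fin n) (j : Fin 2) : vEdge i j = vEdge i 0 := by
  fin_cases j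
  exacts [rfl, Sym2.eq_swap]

lemma vertex_eq_two (hn : 2 < n) {x : Sym2 (Fin n × Fin 2) → ℝ}
    (hx : x ∈ (torusGraph 2 n).balancedWeightings) (i : Fin n) (j : Fin 2) :
    x (hEdge i j) + x (hEdge (i - 1) j) + x (vEdge i 0) = 0 := by
  have h := sum_incident_eq_zero hx i j
  rw [vEdge_eq_vEdge_zero i (j - 1), vEdge_eq_vEdge_zero i j, Finset.pair_eq_singleton,
    Finset.sum_insert (by simp [hEdge_sub_one_ne hn, hEdge_ne_vEdge (by omega : 1 < n)]),
    Finset.sum_pair (hEdge_ne_vEdge (by omega) _ _ _ _)] at h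
  linarith

lemma vertex_eq_one (hn : 2 < n) {x : Sym2 (Fin n × Fin 1) → ℝ}
    (hx : x ∈ (torusGraph 1 n).balancedWeightings) (i : Fin n) :
    x (hEdge i 0) + x (hEdge (i - 1) 0) = 0 := by
  have h := sum_incident_eq_zero hx i 0
  have hloop : x (vEdge i 0) = 0 := hx.1 _ (by simp [vEdge])
  rw [Subsingleton.elim (0 - 1 : Fin 1) 0, Finset.pair_eq_singleton,
    Finset.sum_insert (by simp [hEdge_sub_one_ne hn, hEdge_ne_vEdge (by omega : 1 < n)]),
    Finset.sum_pair (hEdge_ne_vEdge (by omega) _ _ _ _), hloop] at h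
  linarith

lemma balanced_one_eq_zero (hn : 2 < n) {x : Sym2 (Fin n × Fin 1) → ℝ}
    (hx : x ∈ (torusGraph 1 n).balancedWeightings) (h : x (hEdge 0 0) = 0) : x = 0 := by
  have hrow := Fin.forall_eq_zero_of_apply_zero (c := fun i => x (hEdge i 0))
    (fun i _ => vertex_eq_one hn hx i) h
  refine eq_zero_of_forall_hEdge_vEdge hx (fun i j => ?_) fun i j => hx.1 _ (by simp [vEdge])
  rw [Subsingleton.elim j 0]
  exact hrow i

lemma balanced_two_eq_zero (hn : 2 < n) {x : Sym2 (Fin n × Fin 2) → ℝ}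
    (hx : x ∈ (torusGraph 2 n).balancedWeightings) (h0 : ∀ i, x (hEdge i 0) = 0)
    (h1 : Odd n ∨ x (hEdge 0 1) = 0) : x = 0 := by
  have hv : ∀ i, x (vEdge i 0) = 0 := fun i => by
    linarith [vertex_eq_two hn hx i 0, h0 i, h0 (i - 1)]
  have hrow : ∀ i, x (hEdge i 1) + x (hEdge (i - 1) 1) = 0 := fun i => by
    linarith [vertex_eq_two hn hx i 1, hv i]
  have hrow1 := Fin.forall_eq_zero_of_apply_zero (c := fun i => x (hEdge i 1)) (fun i _ => hrow i)
    (h1.elim (Fin.apply_zero_eq_zero_of_odd · hrow) id)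
  refine eq_zero_of_forall_hEdge_vEdge hx (fun i j => ?_) fun i j => by
    rw [vEdge_eq_vEdge_zero]; exact hv i
  fin_cases j
  exacts [h0 i, hrow1 i]

lemma balanced_eq_zero (hm : 2 < m) (hn : 2 < n) (hx : x ∈ (torusGraph m n).balancedWeightings)
    (hv : ∀ i, x (vEdge i 0) = 0) (hh : ∀ i j, j ≠ 0 → x (hEdge i j) = 0)
    (h00 : Odd n ∨ x (hEdge 0 0) = 0) : x = 0 := by
  have hcol : ∀ i j, x (vEdge i j) = 0 := fun i =>
    Fin.forall_eq_zero_of_apply_zero (c := fun j => x (vEdge i j))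
      (fun j hj => by linarith [vertex_eq hm hn hx i j, hh i j hj, hh (i - 1) j hj]) (hv i)
  have hrow : ∀ i, x (hEdge i 0) + x (hEdge (i - 1) 0) = 0 := fun i => by
    linarith [vertex_eq hm hn hx i 0, hcol i 0, hcol i (0 - 1)]
  have hrow0 := Fin.forall_eq_zero_of_apply_zero (c := fun i => x (hEdge i 0)) (fun i _ => hrow i)
    (h00.elim (Fin.apply_zero_eq_zero_of_odd · hrow) id)
  refine eq_zero_of_forall_hEdge_vEdge hx (fun i j => ?_) hcol
  by_cases hj : j = 0
  · exact hj ▸ hrow0 i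
  · exact hh i j hj

def vertPairing (ph : Fin n → ℕ) (p : Fin n × Fin m) : Fin n × Fin m :=
  (p.1, Fin.cyclePartner (ph p.1) p.2)

def horizPairing (ph : Fin m → ℕ) (p : Fin n × Fin m) : Fin n × Fin m :=
  (Fin.cyclePartner (ph p.2) p.1, p.2)

/-- The vertical pairing in phase `q.2`, with the two vertical pairs in the square with lower left
corner `q` turned horizontal. -/
def squarePairing (q p : Fin n × Fin m) : Fin n × Fin m :=
  if (p.1 = q.1 ∨ p.1 = q.1 + 1) ∧ (p.2 = q.2 ∨ p.2 = q.2 + 1) then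
    (Equiv.swap q.1 (q.1 + 1) p.1, p.2)
  else vertPairing (fun _ => q.2.val) p

omit [NeZero n] in
lemma vertPairing_involutive (hm : Even m) (ph : Fin n → ℕ) :
    Function.Involutive (vertPairing ph : Fin n × Fin m → Fin n × Fin m) := fun p => by
  simp [vertPairing, Fin.cyclePartner_involutive hm _ _]

omit [NeZero m] in
lemma horizPairing_involutive (hn : Even n) (ph : Fin m → ℕ) :
    Function.Involutive (horizPairing ph : Fin n × Fin m → Fin n × Fin m) := fun p => by
  simp [horizPairing, Fin.cyclePartner_involutive hn _ _]

lemma squarePairing_involutive (hm : Even m) (q : Fin n × Fin m) :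
    Function.Involutive (squarePairing q) := by
  refine Function.Involutive.ite (fun p => by simp) (vertPairing_involutive hm _) ?_ ?_
  · rintro p ⟨hp1 | hp1, hp2⟩ <;> simp [hp1, hp2]
  · rintro ⟨i, j⟩ ⟨hp1, rfl | rfl⟩
    · simp [vertPairing, hp1, Fin.cyclePartner_self]
    · simp [vertPairing, hp1, Fin.cyclePartner_add_one hm]

omit [NeZero n] in
lemma adj_vertPairing (hm : 1 < m) (ph : Fin n → ℕ) (p : Fin n × Fin m) :
    (torusGraph m n).Adj p (vertPairing ph p) := by
  unfold vertPairing Fin.cyclePartner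
  split_ifs
  exacts [adj_add_one_snd hm _ _, adj_sub_one_snd hm _ _]

omit [NeZero m] in
lemma adj_horizPairing (hn : 1 < n) (ph : Fin m → ℕ) (p : Fin n × Fin m) :
    (torusGraph m n).Adj p (horizPairing ph p) := by
  unfold horizPairing Fin.cyclePartner
  split_ifs
  exacts [adj_add_one_fst hn _ _, adj_sub_one_fst hn _ _]

lemma adj_squarePairing (hm : 1 < m) (hn : 1 < n) (q p : Fin n × Fin m) :
    (torusGraph m n).Adj p (squarePairing q p) := by
  obtain ⟨i, j⟩ := p
  unfold squarePairing
  split_ifs with hp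
  · rcases hp.1 with rfl | rfl
    · simpa using adj_add_one_fst hn q.1 j
    · simpa using adj_sub_one_fst hn (q.1 + 1) j
  · exact adj_vertPairing hm _ _

lemma squarePairing_eq_add_one_fst_iff (hn : 2 < n) (q : Fin n × Fin m) (i : Fin n) (j : Fin m) :
    squarePairing q (i, j) = (i + 1, j) ↔ i = q.1 ∧ (j = q.2 ∨ j = q.2 + 1) := by
  obtain ⟨k, l⟩ := q
  have hk : k + 1 + 1 ≠ k := by simpa using (Fin.sub_one_ne_add_one hn (k + 1)).symm
  unfold squarePairing vertPairing
  split_ifs with hS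
  · obtain ⟨rfl | rfl, hj⟩ := hS
    · simpa using hj
    · simp only [Equiv.swap_apply_right, Prod.mk.injEq, and_true]
      exact iff_of_false hk.symm fun h => Fin.add_one_ne_self (by omega) k h.1
  · simp only [Prod.mk.injEq, (Fin.add_one_ne_self (by omega) i).symm, false_and, false_iff]
    exact fun h => hS ⟨Or.inl h.1, h.2⟩

/-- The alternating 4-cycle around the square with lower left corner `q`. -/
noncomputable def squareVec (q : Fin n × Fin m) : Sym2 (Fin n × Fin m) → ℝ :=
  pairingVec (squarePairing q) - pairingVec (vertPairing fun _ => q.2.val)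

noncomputable def rowShiftVec : Sym2 (Fin n × Fin m) → ℝ :=
  pairingVec (horizPairing fun j => if j = 0 then 1 else 0) - pairingVec (horizPairing fun _ => 0)

noncomputable def colShiftVec : Sym2 (Fin n × Fin m) → ℝ :=
  pairingVec (vertPairing fun i => if i = 0 then 1 else 0) - pairingVec (vertPairing fun _ => 0)

lemma squareVec_mem (hm : Even m) (hn : 1 < n) (q : Fin n × Fin m) :
    squareVec q ∈ vectorSpan ℝ (pmPolytope (torusGraph m n)) :=
  pairingVec_sub_mem_vectorSpan (squarePairing_involutive hm q)
    (adj_squarePairing hm.one_lt hn q) (vertPairing_involutive hm _)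
    (adj_vertPairing hm.one_lt _)

lemma rowShiftVec_mem (hn : Even n) :
    rowShiftVec ∈ vectorSpan ℝ (pmPolytope (torusGraph m n)) :=
  pairingVec_sub_mem_vectorSpan (horizPairing_involutive hn _)
    (adj_horizPairing hn.one_lt _) (horizPairing_involutive hn _)
    (adj_horizPairing hn.one_lt _)

lemma colShiftVec_mem (hm : Even m) :
    colShiftVec ∈ vectorSpan ℝ (pmPolytope (torusGraph m n)) :=
  pairingVec_sub_mem_vectorSpan (vertPairing_involutive hm _)
    (adj_vertPairing hm.one_lt _) (vertPairing_involutive hm _)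
    (adj_vertPairing hm.one_lt _)

lemma squareVec_apply_hEdge (hm : Even m) (hn : 2 < n) (q : Fin n × Fin m) (i : Fin n)
    (j : Fin m) : squareVec q (hEdge i j) = if q = (i, j) ∨ q = (i, j - 1) then 1 else 0 := by
  rw [squareVec, Pi.sub_apply, hEdge, pairingVec_mk (squarePairing_involutive hm _),
    pairingVec_mk (vertPairing_involutive hm _)]
  simp only [squarePairing_eq_add_one_fst_iff hn]
  obtain ⟨k, l⟩ := q
  simp [vertPairing, (Fin.add_one_ne_self (by omega) i).symm, eq_sub_iff_add_eq, eq_comm,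
    and_or_left]

lemma squareVec_apply_vEdge (hm : Even m) (hm' : 2 < m) (q : Fin n × Fin m)
    (i : Fin n) (j : Fin m) :
    squareVec q (vEdge i j) = if q = (i, j) ∨ q = (i - 1, j) then -1 else 0 := by
  rw [squareVec, Pi.sub_apply, vEdge, pairingVec_mk (squarePairing_involutive hm _),
    pairingVec_mk (vertPairing_involutive hm _)]
  obtain ⟨k, l⟩ := q
  have hj := Fin.add_one_ne_self (by omega) j
  have hl : l + 1 + 1 ≠ l := by simpa using (Fin.sub_one_ne_add_one hm' (l + 1)).symm
  unfold squarePairing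
  by_cases hS : (i = k ∨ i = k + 1) ∧ (j = l ∨ j = l + 1)
  · obtain ⟨hi, rfl | rfl⟩ := hS
    · rcases hi with rfl | rfl <;> simp [vertPairing, Fin.cyclePartner_self, hj.symm]
    · simp [vertPairing, Fin.cyclePartner_add_one hm, hl.symm, hi, show m ≠ 1 by omega]
  · rw [if_neg hS, sub_self, if_neg]
    rintro (h | h) <;> simp only [Prod.mk.injEq] at h <;> obtain ⟨rfl, rfl⟩ := h
    · exact hS ⟨Or.inl rfl, Or.inl rfl⟩
    · exact hS ⟨Or.inr (sub_add_cancel i 1).symm, Or.inl rfl⟩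

lemma rowShiftVec_apply_vEdge (hn : Even n) (hm : 1 < m) (i : Fin n) (j : Fin m) :
    rowShiftVec (vEdge i j) = 0 := by
  simp [rowShiftVec, vEdge, pairingVec_mk (horizPairing_involutive hn _), horizPairing,
    (Fin.add_one_ne_self hm j).symm]

lemma rowShiftVec_apply_hEdge_of_ne (hn : Even n) {j : Fin m} (hj : j ≠ 0) (i : Fin n) :
    rowShiftVec (hEdge i j) = 0 := by
  simp [rowShiftVec, hEdge, pairingVec_mk (horizPairing_involutive hn _), horizPairing, hj]

lemma rowShiftVec_apply_hEdge_zero (hn : Even n) (hn' : 2 < n) :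
    rowShiftVec (hEdge (0 : Fin n) (0 : Fin m)) = -1 := by
  have h : (-1 : Fin n) ≠ 1 := by simpa using Fin.sub_one_ne_add_one hn' 0
  simp [rowShiftVec, hEdge, pairingVec_mk (horizPairing_involutive hn _), horizPairing,
    Fin.cyclePartner, h]

lemma colShiftVec_apply_hEdge (hm : Even m) (hn : 1 < n) (i : Fin n) (j : Fin m) :
    colShiftVec (hEdge i j) = 0 := by
  simp [colShiftVec, hEdge, pairingVec_mk (vertPairing_involutive hm _), vertPairing,
    (Fin.add_one_ne_self hn i).symm]

lemma colShiftVec_apply_vEdge_of_ne (hm : Even m) {i : Fin n} (hi : i ≠ 0) (j : Fin m) :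
    colShiftVec (vEdge i j) = 0 := by
  simp [colShiftVec, vEdge, pairingVec_mk (vertPairing_involutive hm _), vertPairing, hi]

lemma colShiftVec_apply_vEdge_zero (hm : Even m) (hm' : 2 < m) :
    colShiftVec (vEdge (0 : Fin n) (0 : Fin m)) = -1 := by
  have h : (-1 : Fin m) ≠ 1 := by simpa using Fin.sub_one_ne_add_one hm' 0
  simp [colShiftVec, vEdge, pairingVec_mk (vertPairing_involutive hm _), vertPairing,
    Fin.cyclePartner, h]

lemma sum_smul_squareVec_apply_hEdge (hm : Even m) (hn : 2 < n) (a : Fin n × Fin m → ℝ)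
    (i : Fin n) (j : Fin m) :
    (∑ q, a q • squareVec q) (hEdge i j) = a (i, j) + a (i, j - 1) := by
  have hj : (i, j) ≠ (i, j - 1) := by simpa using (Fin.sub_one_ne_self hm.one_lt j).symm
  simp [Finset.sum_apply, squareVec_apply_hEdge hm hn, Finset.sum_ite, Finset.filter_or,
    Finset.filter_eq', Finset.sum_pair hj]

lemma sum_smul_squareVec_apply_vEdge (hm : Even m) (hm' : 2 < m) (hn : 1 < n)
    (a : Fin n × Fin m → ℝ) (i : Fin n) (j : Fin m) :
    (∑ q, a q • squareVec q) (vEdge i j) = -(a (i, j) + a (i - 1, j)) := by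
  have hi : (i, j) ≠ (i - 1, j) := by simpa using (Fin.sub_one_ne_self hn i).symm
  simp [Finset.sum_apply, squareVec_apply_vEdge hm hm', Finset.sum_ite, Finset.filter_or,
    Finset.filter_eq', Finset.sum_pair hi, add_comm]

lemma sum_smul_squareVec_apply_hEdge_one (hn : 2 < n) (a : Fin n → ℝ) (i : Fin n) :
    (∑ k, a k • squareVec (k, (0 : Fin 2))) (hEdge i 1) = a i := by
  simp [Finset.sum_apply, squareVec_apply_hEdge even_two hn]

def coordEdge (p : Fin n × Fin m) : Sym2 (Fin n × Fin m) :=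
  if p.2 = 0 then vEdge p.1 0 else hEdge p.1 p.2

lemma balanced_eq_zero_of_coordEdge (hm : 2 < m) (hn : 2 < n) {x : Sym2 (Fin n × Fin m) → ℝ}
    (hx : x ∈ (torusGraph m n).balancedWeightings) (h : ∀ p, x (coordEdge p) = 0)
    (h00 : Odd n ∨ x (hEdge 0 0) = 0) : x = 0 :=
  balanced_eq_zero hm hn hx (fun i => by simpa [coordEdge] using h (i, 0))
    (fun i j hj => by simpa [coordEdge, hj] using h (i, j)) h00

theorem polytopeDim_one (hn : 2 < n) (hn2 : Even n) :
    polytopeDim (pmPolytope (torusGraph 1 n)) = 1 := by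
  refine polytopeDim_pmPolytope_eq_card (fun _ : Unit => hEdge 0 0)
    (fun x hx h => balanced_one_eq_zero hn hx (h ())) _ (fun _ => rowShiftVec_mem hn2)
    (linearIndependent_unique_iff.mpr fun h => ?_)
  simpa [h] using rowShiftVec_apply_hEdge_zero (m := 1) hn2 hn

theorem polytopeDim_two_of_odd (hn : 1 < n) (hn2 : Odd n) :
    polytopeDim (pmPolytope (torusGraph 2 n)) = n := by
  have hn' : 2 < n := by obtain ⟨k, rfl⟩ := hn2; omega
  simpa using polytopeDim_pmPolytope_eq_card (fun k => hEdge k 0)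
    (fun x hx h => balanced_two_eq_zero hn' hx h (Or.inl hn2)) (fun k => squareVec (k, 0))
    (fun _ => squareVec_mem even_two hn _)
    (Fintype.linearIndependent_iff.mpr fun a ha i => by
      simpa using (sum_smul_squareVec_apply_hEdge_one hn' a i).symm.trans (congrFun ha _))

theorem polytopeDim_two_of_even (hn : 2 < n) (hn2 : Even n) :
    polytopeDim (pmPolytope (torusGraph 2 n)) = n + 1 := by
  refine (polytopeDim_pmPolytope_eq_card (Sum.elim (fun k => hEdge k 0) fun _ : Unit => hEdge 0 1)
    (fun x hx h => balanced_two_eq_zero hn hx (fun i => h (.inl i)) (Or.inr (h (.inr ()))))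
    (Sum.elim (fun k => squareVec (k, 0)) fun _ => rowShiftVec) ?_ ?_).trans (by simp)
  · rintro (k | -)
    exacts [squareVec_mem even_two (by omega) _, rowShiftVec_mem hn2]
  · refine Fintype.linearIndependent_iff.mpr fun g hg => ?_
    simp only [Fintype.sum_sum_type, Sum.elim_inl, Sum.elim_inr, Finset.univ_unique,
      Finset.sum_singleton] at hg
    have ha : ∀ i, g (.inl i) = 0 := fun i => by
      simpa [rowShiftVec_apply_hEdge_of_ne hn2 (one_ne_zero (α := Fin 2)),
        sum_smul_squareVec_apply_hEdge_one hn]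
        using congrFun hg (hEdge i 1)
    have hb : g (.inr ()) = 0 := by
      simpa [rowShiftVec_apply_hEdge_zero hn2 hn, ha] using congrFun hg (hEdge 0 0)
    rintro (i | ⟨⟩)
    exacts [ha i, hb]

theorem polytopeDim_of_odd (hm : 2 < m) (hm2 : Even m) (hn : 1 < n) (hn2 : Odd n) :
    polytopeDim (pmPolytope (torusGraph m n)) = m * n := by
  have hn' : 2 < n := by obtain ⟨k, rfl⟩ := hn2; omega
  refine (polytopeDim_pmPolytope_eq_card coordEdge
    (fun x hx h => balanced_eq_zero_of_coordEdge hm hn' hx h (Or.inl hn2)) squareVec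
    (squareVec_mem hm2 hn) (Fintype.linearIndependent_iff.mpr fun a ha => ?_)).trans
    (by simp [mul_comm])
  have hrec : ∀ j i, a (i, j) + a (i - 1, j) = 0 := fun j i => by
    have e := congrFun ha (vEdge i j)
    rw [sum_smul_squareVec_apply_vEdge hm2 hm hn, Pi.zero_apply] at e
    linarith
  rintro ⟨i, j⟩
  exact Fin.forall_eq_zero_of_apply_zero (c := fun i => a (i, j)) (fun i _ => hrec j i)
    (Fin.apply_zero_eq_zero_of_odd hn2 (hrec j)) i

lemma eq_zero_of_sum_squareVec_add_shifts (hm : 2 < m) (hm2 : Even m) (hn : 2 < n) (hn2 : Even n)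
    {a : Fin n × Fin m → ℝ} {γ β : ℝ} (ha : a (0, 0) = 0)
    (h : ∑ q, a q • squareVec q + γ • colShiftVec + β • rowShiftVec = 0) :
    a = 0 ∧ γ = 0 ∧ β = 0 := by
  have hv : ∀ i j, a (i, j) + a (i - 1, j) = γ * colShiftVec (vEdge i j) := fun i j => by
    have e := congrFun h (vEdge i j)
    simp only [Pi.add_apply, Pi.smul_apply, smul_eq_mul, Pi.zero_apply,
      sum_smul_squareVec_apply_vEdge hm2 hm (by omega : 1 < n),
      rowShiftVec_apply_vEdge hn2 (by omega : 1 < m)] at e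
    linarith
  have hh : ∀ i j, a (i, j) + a (i, j - 1) + β * rowShiftVec (hEdge i j) = 0 := fun i j => by
    have e := congrFun h (hEdge i j)
    simp only [Pi.add_apply, Pi.smul_apply, smul_eq_mul, Pi.zero_apply,
      sum_smul_squareVec_apply_hEdge hm2 hn, colShiftVec_apply_hEdge hm2 (by omega : 1 < n)] at e
    linarith
  have hcol : ∀ i, a (i, 0) = 0 := Fin.forall_eq_zero_of_apply_zero (c := fun i => a (i, 0))
    (fun i hi => by simpa [colShiftVec_apply_vEdge_of_ne hm2 hi] using hv i 0) ha
  have hγ : γ = 0 := by simpa [hcol, colShiftVec_apply_vEdge_zero hm2 hm] using hv 0 0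
  have hrow : ∀ j, a (0, j) = 0 := Fin.forall_eq_zero_of_apply_zero (c := fun j => a (0, j))
    (fun j hj => by simpa [rowShiftVec_apply_hEdge_of_ne hn2 hj] using hh 0 j) ha
  have hβ : β = 0 := by simpa [hrow, rowShiftVec_apply_hEdge_zero hn2 hn] using hh 0 0
  refine ⟨funext fun ⟨i, j⟩ => ?_, hγ, hβ⟩
  exact Fin.forall_eq_zero_of_apply_zero (c := fun i => a (i, j))
    (fun i _ => by simpa [hγ] using hv i j) (hrow j) i

theorem polytopeDim_of_even (hm : 2 < m) (hm2 : Even m) (hn : 2 < n) (hn2 : Even n) :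
    polytopeDim (pmPolytope (torusGraph m n)) = m * n + 1 := by
  let d : Fin n × Fin m → Sym2 (Fin n × Fin m) → ℝ := fun q =>
    if q = (0, 0) then colShiftVec else squareVec q
  refine (polytopeDim_pmPolytope_eq_card (Sum.elim coordEdge fun _ : Unit => hEdge 0 0)
    (fun x hx h => balanced_eq_zero_of_coordEdge hm hn hx (fun p => h (.inl p))
      (Or.inr (h (.inr ()))))
    (Sum.elim d fun _ => rowShiftVec) ?_ ?_).trans (by simp [mul_comm])
  · rintro (q | -)
    · by_cases hq : q = (0, 0)
      · simpa [d, hq] using colShiftVec_mem hm2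
      · simpa [d, hq] using squareVec_mem hm2 (by omega) q
    · exact rowShiftVec_mem hn2
  refine Fintype.linearIndependent_iff.mpr fun g hg => ?_
  let a : Fin n × Fin m → ℝ := fun q => if q = (0, 0) then 0 else g (.inl q)
  have hsplit :
      ∑ q, g (.inl q) • d q = ∑ q, a q • squareVec q + g (.inl (0, 0)) • colShiftVec := by
    have h : ∀ q, g (.inl q) • d q =
        a q • squareVec q + if q = (0, 0) then g (.inl q) • colShiftVec else 0 := fun q => by
      by_cases hq : q = (0, 0) <;> simp [a, d, hq]
    simp [h, Finset.sum_add_distrib]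
  simp only [Fintype.sum_sum_type, Sum.elim_inl, Sum.elim_inr, Finset.univ_unique,
    Finset.sum_singleton, hsplit] at hg
  obtain ⟨ha, hγ, hβ⟩ := eq_zero_of_sum_squareVec_add_shifts hm hm2 hn hn2 (by simp [a]) hg
  rintro (q | ⟨⟩)
  · by_cases hq : q = (0, 0)
    · exact hq ▸ hγ
    · simpa [a, hq] using congrFun ha q
  · exact hβ

end torusGraph

/-- Dimensions of the perfect matching polytopes of torus graphs. -/
theorem pm_polytope_torus_dim :
    (∀ n : ℕ, 2 < n → Even n → polytopeDim (pmPolytope (torusGraph 1 n)) = 1) ∧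
    (∀ n : ℕ, 2 < n → Even n → polytopeDim (pmPolytope (torusGraph 2 n)) = n + 1) ∧
    (∀ n : ℕ, 1 < n → Odd n → polytopeDim (pmPolytope (torusGraph 2 n)) = n) ∧
    (∀ m n : ℕ, 2 < m → 2 < n → Even m → Even n →
      polytopeDim (pmPolytope (torusGraph m n)) = m * n + 1) ∧
    (∀ m n : ℕ, 2 < m → Even m → 1 < n → Odd n →
      polytopeDim (pmPolytope (torusGraph m n)) = m * n) := by
  refine ⟨fun n hn hn2 => ?_, fun n hn hn2 => ?_, fun n hn hn2 => ?_,
    fun m n hm hn hm2 hn2 => ?_, fun m n hm hm2 hn hn2 => ?_⟩ <;>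
    have : NeZero n := ⟨by omega⟩
  · exact torusGraph.polytopeDim_one hn hn2
  · exact torusGraph.polytopeDim_two_of_even hn hn2
  · exact torusGraph.polytopeDim_two_of_odd hn hn2
  · have : NeZero m := ⟨by omega⟩
    exact torusGraph.polytopeDim_of_even hm hm2 hn hn2
  · have : NeZero m := ⟨by omega⟩
    exact torusGraph.polytopeDim_of_odd hm hm2 hn hn2
end

section
/- Let n ≥ 4 be even. Then the dilate tP(3,n) of the perfect matching polytope P(3,n) of the grid graph G(3,n) contains no lattice point in its relative interior for t = 1, 2, 3, 4, and the dilate 5P(3,n) contains exactly one lattice point in its relative interior. -/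
open Finset Pointwise

/-!
`G(3, n)` is bipartite and, for even `n`, reflecting the columns exchanges its two colour classes.
Birkhoff–von Neumann therefore identifies `P(3, n)` with the polytope of nonnegative edge weights
summing to `1` at every vertex, so `t P(3, n)` is cut out by the vertex equations (with sum `t`)
and `x ≥ 0`. A weighting that is positive on every edge exists, so the relative interior of
`t P(3, n)` consists of the weightings positive on every edge, and its lattice points are the
labellings by positive integers with sum `t` at every vertex.

For such a labelling, the equations at the first two columns together with all labels being at
least `1` force `t ≥ 5`. For `t = 5` the labels are then forced column by column: the vertical
labels are `2, 2` in the outer columns and `1, 1` elsewhere, and the horizontal labels entering a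
column alternate between `(3, 1, 3)` and `(1, 2, 1)`.
-/

open Filter Topology in
theorem eventually_smul_sub_add_mem_of_mem_intrinsicInterior {E : Type*} [AddCommGroup E]
    [Module ℝ E] [TopologicalSpace E] [ContinuousAdd E] [ContinuousSMul ℝ E] {s : Set E}
    {x y : E} (hx : x ∈ intrinsicInterior ℝ s) (hy : y ∈ affineSpan ℝ s) :
    ∀ᶠ ε in 𝓝 (0 : ℝ), ε • (x - y) + x ∈ s := by
  obtain ⟨z, hz, rfl⟩ := hx
  let γ : ℝ → affineSpan ℝ s := fun ε =>
    ⟨ε • (z.1 - y) + z.1, AffineSubspace.smul_vsub_vadd_mem _ ε z.2 hy z.2⟩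
  have hγ : Continuous γ :=
    ((continuous_id.smul continuous_const).add continuous_const).subtype_mk _
  have hγ0 : γ 0 = z := Subtype.ext (by simp [γ])
  filter_upwards [hγ.continuousAt.preimage_mem_nhds (hγ0 ▸ isOpen_interior.mem_nhds hz)]
    with ε hε using interior_subset (s := (Subtype.val ⁻¹' s : Set (affineSpan ℝ s))) hε

theorem mem_intrinsicInterior_of_isOpen {𝕜 E : Type*} [Ring 𝕜] [AddCommGroup E]
    [Module 𝕜 E] [TopologicalSpace E] {s U : Set E} {x : E} (hU : IsOpen U)
    (hsU : ∀ y ∈ affineSpan 𝕜 s, y ∈ U → y ∈ s) (hx : x ∈ s) (hxU : x ∈ U) :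
    x ∈ intrinsicInterior 𝕜 s :=
  ⟨⟨x, subset_affineSpan 𝕜 s hx⟩, mem_interior.2 ⟨Subtype.val ⁻¹' U,
    fun y hy => hsU y y.2 hy, hU.preimage continuous_subtype_val, hxU⟩, rfl⟩

namespace SimpleGraph

variable {V : Type*}

theorem sum_filter_mem_eq_sum_mk [Fintype V] [DecidableEq V] {M : Type*} [AddCommMonoid M]
    (x : Sym2 V → M) (v : V) :
    ∑ e ∈ univ.filter (fun e : Sym2 V => v ∈ e), x e = ∑ u, x s(v, u) := by
  have himage : univ.image (fun u => s(v, u)) = univ.filter (fun e : Sym2 V => v ∈ e) := by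
    ext e
    simp only [mem_image, mem_filter, mem_univ, true_and]
    exact ⟨by rintro ⟨u, -, rfl⟩; exact Sym2.mem_mk_left v u,
      fun he => ⟨Sym2.Mem.other he, Sym2.other_spec he⟩⟩
  rw [← himage, sum_image fun a _ b _ h => Sym2.congr_right.1 h]

section Magic

variable [Fintype V] [DecidableEq V] (G : SimpleGraph V)

def IsMagic {R : Type*} [AddCommMonoid R] (t : R) (x : Sym2 V → R) : Prop :=
  (∀ e ∉ G.edgeSet, x e = 0) ∧ ∀ v, ∑ e ∈ univ.filter (fun e : Sym2 V => v ∈ e), x e = t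

def IsPositiveMagic {R : Type*} [AddCommMonoid R] [PartialOrder R] (t : R) (x : Sym2 V → R) :
    Prop :=
  G.IsMagic t x ∧ ∀ e ∈ G.edgeSet, 0 < x e

def magicPolytope (t : ℝ) : Set (Sym2 V → ℝ) :=
  {x | G.IsMagic t x ∧ 0 ≤ x}

variable {G}

theorem IsMagic.smul {R : Type*} [Semiring R] {t : R} {x : Sym2 V → R} (hx : G.IsMagic t x)
    (c : R) : G.IsMagic (c * t) (c • x) :=
  ⟨fun e he => by simp [hx.1 e he], fun v => by simp [← mul_sum, hx.2 v]⟩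

theorem IsPositiveMagic.smul {t : ℝ} {x : Sym2 V → ℝ} (hx : G.IsPositiveMagic t x) {c : ℝ}
    (hc : 0 < c) : G.IsPositiveMagic (c * t) (c • x) :=
  ⟨hx.1.smul c, fun e he => mul_pos hc (hx.2 e he)⟩

theorem isPositiveMagic_intCast_iff {t : ℤ} {x : Sym2 V → ℤ} :
    G.IsPositiveMagic (t : ℝ) (fun e => (x e : ℝ)) ↔ G.IsPositiveMagic t x := by
  simp only [IsPositiveMagic, IsMagic]
  norm_cast

theorem IsPositiveMagic.mem_magicPolytope {t : ℝ} {x : Sym2 V → ℝ}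
    (hx : G.IsPositiveMagic t x) : x ∈ G.magicPolytope t := by
  refine ⟨hx.1, fun e => ?_⟩
  by_cases he : e ∈ G.edgeSet
  · exact (hx.2 e he).le
  · exact (hx.1.1 e he).ge

theorem convex_magicPolytope (t : ℝ) : Convex ℝ (G.magicPolytope t) := by
  rintro x ⟨hx, hx0⟩ y ⟨hy, hy0⟩ a b ha hb hab
  refine ⟨⟨fun e he => by simp [hx.1 e he, hy.1 e he], fun v => ?_⟩, ?_⟩
  · simp [sum_add_distrib, ← mul_sum, hx.2 v, hy.2 v, ← add_mul, hab]
  · exact add_nonneg (smul_nonneg ha hx0) (smul_nonneg hb hy0)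

theorem smul_magicPolytope_one {t : ℝ} (ht : 0 < t) :
    t • G.magicPolytope 1 = G.magicPolytope t := by
  ext x
  rw [Set.mem_smul_set_iff_inv_smul_mem₀ ht.ne']
  constructor
  · rintro ⟨hx, hx0⟩
    have := hx.smul t
    rw [mul_one, smul_inv_smul₀ ht.ne'] at this
    exact ⟨this, by simpa [smul_inv_smul₀ ht.ne'] using smul_nonneg ht.le hx0⟩
  · rintro ⟨hx, hx0⟩
    have := hx.smul t⁻¹
    rw [inv_mul_cancel₀ ht.ne'] at this
    exact ⟨this, smul_nonneg (inv_nonneg.2 ht.le) hx0⟩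

theorem isMagic_indicator_of_isPerfectMatching {M : G.Subgraph} (hM : M.IsPerfectMatching) :
    G.IsMagic (1 : ℝ) (M.edgeSet.indicator 1) := by
  refine ⟨fun e he => Set.indicator_of_notMem (fun h => he (M.edgeSet_subset h)) 1, fun v => ?_⟩
  obtain ⟨w, hw, hunique⟩ := hM.1 (hM.2 v)
  rw [sum_filter_mem_eq_sum_mk, sum_eq_single w]
  · exact Set.indicator_of_mem (M.mem_edgeSet.2 hw) 1
  · exact fun u _ hu => Set.indicator_of_notMem (fun h => hu (hunique u h)) 1
  · simp

theorem pmPolytope_subset_magicPolytope : pmPolytope G ⊆ G.magicPolytope 1 :=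
  convexHull_min (by
    rintro _ ⟨M, hM, rfl⟩
    exact ⟨isMagic_indicator_of_isPerfectMatching hM,
      Set.indicator_nonneg fun _ _ => zero_le_one⟩) (convex_magicPolytope 1)

end Magic

section Bipartite

variable {G : SimpleGraph V} {C : G.Coloring Bool}

theorem exists_isPerfectMatching_of_equiv (g : C.colorClass false ≃ C.colorClass true)
    (hg : ∀ b, G.Adj b.1 (g b).1) :
    ∃ M : G.Subgraph, M.IsPerfectMatching ∧ M.edgeSet = Set.range fun b => s(b.1, (g b).1) := by
  let M : G.Subgraph :=
    { verts := Set.univ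
      Adj := fun p q => s(p, q) ∈ Set.range fun b => s(b.1, (g b).1)
      adj_sub := by
        rintro p q ⟨b, hb⟩
        rw [← mem_edgeSet, ← hb]
        exact hg b
      edge_vert := fun _ => Set.mem_univ _
      symm := ⟨fun p q h => by rwa [Sym2.eq_swap]⟩ }
  refine ⟨M, Subgraph.isPerfectMatching_iff.2 fun v => ?_,
    Set.ext fun e => Sym2.ind (fun _ _ => Subgraph.mem_edgeSet) e⟩
  simp only [M, Set.mem_range, Sym2.eq_iff]
  cases hv : C v
  · refine ⟨g ⟨v, hv⟩, ⟨⟨v, hv⟩, Or.inl ⟨rfl, rfl⟩⟩, ?_⟩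
    rintro w ⟨b, ⟨hb, rfl⟩ | ⟨-, hb⟩⟩
    · obtain rfl : b = ⟨v, hv⟩ := Subtype.ext hb
      rfl
    · have : C (g b) = true := (g b).2
      simp_all
  · refine ⟨g.symm ⟨v, hv⟩, ⟨g.symm ⟨v, hv⟩, Or.inr ⟨rfl, by simp⟩⟩, ?_⟩
    rintro w ⟨b, ⟨hb, -⟩ | ⟨rfl, hb⟩⟩
    · have : C b = false := b.2
      simp_all
    · exact congrArg Subtype.val (g.eq_symm_apply.2 (Subtype.ext hb))

theorem eq_of_forall_colorClass_eq {R : Type*} (f : C.colorClass false ≃ C.colorClass true)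
    {y z : Sym2 V → R} (hyz : ∀ u v, C u = C v → y s(u, v) = z s(u, v))
    (h : ∀ (b : C.colorClass false) c, y s(b.1, (f c).1) = z s(b.1, (f c).1)) : y = z := by
  funext e
  induction e using Sym2.ind with
  | _ p q =>
    by_cases hpq : C p = C q
    · exact hyz p q hpq
    cases hp : C p
    · have hq : C q = true := by simpa [hp] using Ne.symm hpq
      simpa using h ⟨p, hp⟩ (f.symm ⟨q, hq⟩)
    · have hq : C q = false := by simpa [hp] using Ne.symm hpq
      simpa [Sym2.eq_swap] using h ⟨q, hq⟩ (f.symm ⟨p, hp⟩)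

theorem sum_colorClass_eq_sum [Fintype V] (C : G.Coloring Bool) {R : Type*} [AddCommMonoid R]
    {x : Sym2 V → R} (hx : ∀ e ∉ G.edgeSet, x e = 0) (v : V) (k : Bool) (hk : C v ≠ k) :
    ∑ u : C.colorClass k, x s(v, u.1) = ∑ u, x s(v, u) := by
  rw [← sum_subtype (univ.filter (C · = k)) (p := (· ∈ C.colorClass k))
    (by simp [Coloring.colorClass]) (fun u => x s(v, u)), sum_filter_of_ne]
  intro u _ hu
  have := C.valid (G.mem_edgeSet.1 (not_imp_comm.1 (hx s(v, u)) hu))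
  cases h : C u <;> cases hv : C v <;> simp_all

theorem mem_doublyStochastic_of_mem_magicPolytope [Fintype V] [DecidableEq V]
    (f : C.colorClass false ≃ C.colorClass true) {x : Sym2 V → ℝ} (hx : x ∈ G.magicPolytope 1) :
    Matrix.of (fun b c : C.colorClass false => x s(b.1, (f c).1)) ∈
      doublyStochastic ℝ (C.colorClass false) := by
  have hrow (v : V) : ∑ u, x s(v, u) = 1 := by rw [← sum_filter_mem_eq_sum_mk, hx.1.2 v]
  refine mem_doublyStochastic_iff_sum.2 ⟨fun b c => hx.2 _, fun b => ?_, fun c => ?_⟩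
  · have hb : C b = false := b.2
    rw [← hrow b, ← sum_colorClass_eq_sum C hx.1.1 b true (by simp [hb])]
    exact f.sum_comp fun u => x s(b.1, u.1)
  · have hc : C (f c) = true := (f c).2
    rw [← hrow (f c), ← sum_colorClass_eq_sum C hx.1.1 (f c) false (by simp [hc])]
    simp [Sym2.eq_swap]

def permMatchingEdges (f : C.colorClass false ≃ C.colorClass true)
    (σ : Equiv.Perm (C.colorClass false)) : Set (Sym2 V) :=
  Set.range fun b => s(b.1, (f (σ b)).1)

theorem mk_notMem_permMatchingEdges {f : C.colorClass false ≃ C.colorClass true}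
    (σ : Equiv.Perm (C.colorClass false)) {u v : V} (huv : C u = C v) :
    s(u, v) ∉ permMatchingEdges f σ := by
  rintro ⟨b, hb⟩
  have hb' : C b = false := b.2
  have hfb : C (f (σ b)) = true := (f (σ b)).2
  rcases Sym2.eq_iff.1 hb with ⟨rfl, rfl⟩ | ⟨rfl, rfl⟩ <;> simp_all

theorem indicator_permMatchingEdges_mk [DecidableEq V]
    {f : C.colorClass false ≃ C.colorClass true}
    (σ : Equiv.Perm (C.colorClass false)) (b c : C.colorClass false) :
    (permMatchingEdges f σ).indicator (1 : Sym2 V → ℝ) s(b.1, (f c).1) =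
      if σ b = c then 1 else 0 := by
  split_ifs with h
  · exact Set.indicator_of_mem (show _ ∈ permMatchingEdges f σ from ⟨b, by subst h; rfl⟩) 1
  refine Set.indicator_of_notMem ?_ 1
  rintro ⟨b', hb'⟩
  rcases Sym2.eq_iff.1 hb' with ⟨hb, hc⟩ | ⟨hb, -⟩
  · rw [Subtype.ext hb] at hc
    exact h (f.injective (Subtype.ext hc))
  · have : C b' = false := b'.2
    have : C (f c) = true := (f c).2
    simp_all

theorem magicPolytope_one_subset_pmPolytope [Fintype V] [DecidableEq V]
    (f : C.colorClass false ≃ C.colorClass true) :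
    G.magicPolytope 1 ⊆ pmPolytope G := by
  intro x hx
  obtain ⟨w, hw0, hw1, hwA⟩ :=
    exists_eq_sum_perm_of_mem_doublyStochastic (mem_doublyStochastic_of_mem_magicPolytope f hx)
  have hentry (b c : C.colorClass false) :
      x s(b.1, (f c).1) = ∑ σ, w σ * if σ b = c then 1 else 0 := by
    have := congrFun₂ hwA b c
    simp only [Matrix.sum_apply, Matrix.smul_apply, Matrix.of_apply] at this
    simp [← this, Equiv.Perm.permMatrix, Equiv.toPEquiv_apply]
  -- `x` dominates `w σ` on the edges of `σ`, so permutations of positive weight use only edges.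
  have hadj (σ) (hσ : w σ ≠ 0) (b : C.colorClass false) : G.Adj b (f (σ b)) := by
    by_contra hnadj
    have hle : w σ ≤ ∑ τ, w τ * if τ b = σ b then 1 else 0 :=
      (by simp : w σ = w σ * if σ b = σ b then 1 else 0) ▸
        single_le_sum (f := fun τ => w τ * if τ b = σ b then 1 else 0)
          (fun τ _ => mul_nonneg (hw0 τ) (by split_ifs <;> norm_num)) (mem_univ σ)
    rw [← hentry, hx.1.1 _ hnadj] at hle
    exact hσ (le_antisymm hle (hw0 σ))
  have hx_eq : x = univ.centerMass w fun σ => (permMatchingEdges f σ).indicator 1 := by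
    rw [centerMass_eq_of_sum_1 _ _ hw1]
    refine eq_of_forall_colorClass_eq f (fun u v huv => ?_) (fun b c => ?_)
    · simp [Finset.sum_apply, Set.indicator_of_notMem (mk_notMem_permMatchingEdges _ huv),
        hx.1.1 _ fun h => C.valid (G.mem_edgeSet.1 h) huv]
    · simp [Finset.sum_apply, indicator_permMatchingEdges_mk, hentry]
  rw [hx_eq, ← centerMass_filter_ne_zero]
  refine centerMass_mem_convexHull _ (fun σ _ => hw0 σ) (by simp [sum_filter_ne_zero, hw1])
    fun σ hσ => ?_
  obtain ⟨M, hM, hME⟩ :=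
    exists_isPerfectMatching_of_equiv (σ.trans f) (hadj σ (mem_filter.1 hσ).2)
  exact ⟨M, hM, by rw [hME]; rfl⟩

theorem pmPolytope_eq_magicPolytope_one [Fintype V] [DecidableEq V]
    (f : C.colorClass false ≃ C.colorClass true) :
    pmPolytope G = G.magicPolytope 1 :=
  pmPolytope_subset_magicPolytope.antisymm (magicPolytope_one_subset_pmPolytope f)

end Bipartite

section RelativeInterior

variable [Fintype V] [DecidableEq V] {G : SimpleGraph V}

theorem IsMagic.of_mem_affineSpan {t : ℝ} {s : Set (Sym2 V → ℝ)}
    (hs : ∀ x ∈ s, G.IsMagic t x) {y : Sym2 V → ℝ} (hy : y ∈ affineSpan ℝ s) :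
    G.IsMagic t y := by
  refine ⟨fun e he => ?_, fun v => ?_⟩
  · have := AffineMap.eqOn_affineSpan
      (f := (LinearMap.proj e : (Sym2 V → ℝ) →ₗ[ℝ] ℝ).toAffineMap)
      (g := AffineMap.const ℝ _ (0 : ℝ)) (fun x hx => by simpa using (hs x hx).1 e he) hy
    simpa using this
  · have := AffineMap.eqOn_affineSpan
      (f := (∑ e ∈ univ.filter (fun e : Sym2 V => v ∈ e),
        (LinearMap.proj e : (Sym2 V → ℝ) →ₗ[ℝ] ℝ)).toAffineMap)
      (g := AffineMap.const ℝ _ t) (fun x hx => by simpa using (hs x hx).2 v) hy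
    simpa using this

theorem intrinsicInterior_magicPolytope {t : ℝ} {u : Sym2 V → ℝ}
    (hu : G.IsPositiveMagic t u) :
    intrinsicInterior ℝ (G.magicPolytope t) = {x | G.IsPositiveMagic t x} := by
  ext x
  constructor
  · intro hx
    obtain ⟨hxm, hx0⟩ := intrinsicInterior_subset hx
    refine ⟨hxm, fun e he => (hx0 e).lt_of_ne' fun hxe => ?_⟩
    -- Moving from `u` through `x` slightly beyond `x` stays in the polytope, but makes the
    -- coordinate `e` negative.
    obtain ⟨ε, hεx, hε⟩ := (((eventually_smul_sub_add_mem_of_mem_intrinsicInterior hx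
      (subset_affineSpan ℝ _ hu.mem_magicPolytope)).filter_mono nhdsWithin_le_nhds).and
      self_mem_nhdsWithin).exists (f := nhdsWithin 0 (Set.Ioi 0))
    have := hεx.2 e
    simp only [Pi.add_apply, Pi.smul_apply, Pi.sub_apply, smul_eq_mul, hxe, Pi.zero_apply]
      at this
    nlinarith [hu.2 e he]
  · intro hx
    have hU : IsOpen {y : Sym2 V → ℝ | ∀ e ∈ G.edgeSet, 0 < y e} := by
      simp only [Set.ofPred_forall]
      exact G.edgeSet.toFinite.isOpen_biInter fun e _ =>
        isOpen_lt continuous_const (continuous_apply e)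
    exact mem_intrinsicInterior_of_isOpen hU
      (fun y hy hyU => IsPositiveMagic.mem_magicPolytope
        ⟨IsMagic.of_mem_affineSpan (fun _ h => h.1) hy, hyU⟩) hx.mem_magicPolytope hx.2

theorem interiorLatticeCount_pmPolytope {C : G.Coloring Bool}
    (f : C.colorClass false ≃ C.colorClass true) {u : Sym2 V → ℝ} (hu : G.IsPositiveMagic 1 u)
    {t : ℕ} (ht : 0 < t) :
    interiorLatticeCount (pmPolytope G) t =
      Nat.card {x : Sym2 V → ℤ // G.IsPositiveMagic (t : ℤ) x} := by
  have ht' : (0 : ℝ) < t := Nat.cast_pos.2 ht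
  rw [interiorLatticeCount, pmPolytope_eq_magicPolytope_one f, smul_magicPolytope_one ht',
    intrinsicInterior_magicPolytope (by simpa using hu.smul ht')]
  exact Nat.card_congr (Equiv.subtypeEquivRight fun x => by
    simpa using (isPositiveMagic_intCast_iff (t := t) (x := x)))

end RelativeInterior

end SimpleGraph

section GridLabels

variable {m n : ℕ} {M : Type*}

theorem gridGraph_adj {p q : Fin n × Fin m} :
    (gridGraph m n).Adj p q ↔
      p.2 = q.2 ∧ (p.1.val + 1 = q.1.val ∨ q.1.val + 1 = p.1.val) ∨
        p.1 = q.1 ∧ (p.2.val + 1 = q.2.val ∨ q.2.val + 1 = p.2.val) := by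
  simp only [gridGraph, Nat.dist, Fin.ext_iff]
  omega

/-- The label of the horizontal edge between columns `i - 1` and `i` in row `j`, and `0` if there
is no such edge. -/
def leftLabel [Zero M] (x : Sym2 (Fin n × Fin m) → M) (i j : ℕ) : M :=
  if h : 0 < i ∧ i < n ∧ j < m then
    x s((⟨i - 1, by omega⟩, ⟨j, h.2.2⟩), (⟨i, h.2.1⟩, ⟨j, h.2.2⟩))
  else 0

/-- The label of the vertical edge between rows `j - 1` and `j` in column `i`, and `0` if there is
no such edge. -/
def downLabel [Zero M] (x : Sym2 (Fin n × Fin m) → M) (i j : ℕ) : M :=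
  if h : i < n ∧ 0 < j ∧ j < m then
    x s((⟨i, h.1⟩, ⟨j - 1, by omega⟩), (⟨i, h.1⟩, ⟨j, h.2.2⟩))
  else 0

theorem leftLabel_eq_zero [Zero M] {x : Sym2 (Fin n × Fin m) → M} {i j : ℕ}
    (h : ¬(0 < i ∧ i < n ∧ j < m)) : leftLabel x i j = 0 :=
  dif_neg h

theorem downLabel_eq_zero [Zero M] {x : Sym2 (Fin n × Fin m) → M} {i j : ℕ}
    (h : ¬(i < n ∧ 0 < j ∧ j < m)) : downLabel x i j = 0 :=
  dif_neg h

theorem leftLabel_eq [Zero M] {x : Sym2 (Fin n × Fin m) → M} {p q : Fin n × Fin m}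
    (h2 : p.2 = q.2) (h1 : p.1.val + 1 = q.1.val) : leftLabel x q.1 q.2 = x s(p, q) := by
  obtain ⟨⟨a, ha⟩, b, hb⟩ := p
  obtain ⟨⟨c, hc⟩, d, hd⟩ := q
  simp only [Fin.mk.injEq] at h1 h2
  subst h1 h2
  simp [leftLabel, hc, hd]

theorem downLabel_eq [Zero M] {x : Sym2 (Fin n × Fin m) → M} {p q : Fin n × Fin m}
    (h1 : p.1 = q.1) (h2 : p.2.val + 1 = q.2.val) : downLabel x q.1 q.2 = x s(p, q) := by
  obtain ⟨⟨a, ha⟩, b, hb⟩ := p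
  obtain ⟨⟨c, hc⟩, d, hd⟩ := q
  simp only [Fin.mk.injEq] at h1 h2
  subst h1 h2
  simp [downLabel, hc, hd]

section Sums

variable [AddCommMonoid M] (x : Sym2 (Fin n × Fin m) → M) (p : Fin n × Fin m)

theorem sum_ite_left_eq_leftLabel :
    ∑ u, (if u.2 = p.2 ∧ u.1.val + 1 = p.1.val then x s(u, p) else 0) = leftLabel x p.1 p.2 := by
  by_cases hp : 0 < p.1.val
  · rw [sum_eq_single_of_mem (⟨p.1.val - 1, by omega⟩, p.2) (mem_univ _),
      if_pos ⟨rfl, by simp; omega⟩]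
    · exact (leftLabel_eq (p := ((⟨p.1.val - 1, by omega⟩ : Fin n), p.2)) (q := p) rfl
        (Nat.sub_add_cancel hp)).symm
    rintro u - hu
    exact if_neg fun ⟨h2, h1⟩ => hu (Prod.ext (Fin.ext (by simp; omega)) h2)
  · rw [leftLabel, dif_neg (by omega)]
    exact sum_eq_zero fun u _ => if_neg (by omega)

theorem sum_ite_right_eq_leftLabel :
    ∑ u, (if p.2 = u.2 ∧ p.1.val + 1 = u.1.val then x s(p, u) else 0) =
      leftLabel x (p.1 + 1) p.2 := by
  by_cases hp : p.1.val + 1 < n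
  · rw [sum_eq_single_of_mem (⟨p.1.val + 1, hp⟩, p.2) (mem_univ _), if_pos ⟨rfl, rfl⟩]
    · exact (leftLabel_eq (p := p) (q := (⟨p.1.val + 1, hp⟩, p.2)) rfl rfl).symm
    rintro u - hu
    exact if_neg fun ⟨h2, h1⟩ => hu (Prod.ext (Fin.ext (by simp; omega)) h2.symm)
  · rw [leftLabel, dif_neg (by omega)]
    exact sum_eq_zero fun u _ => if_neg (by omega)

theorem sum_ite_down_eq_downLabel :
    ∑ u, (if u.1 = p.1 ∧ u.2.val + 1 = p.2.val then x s(u, p) else 0) = downLabel x p.1 p.2 := by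
  by_cases hp : 0 < p.2.val
  · rw [sum_eq_single_of_mem (p.1, ⟨p.2.val - 1, by omega⟩) (mem_univ _),
      if_pos ⟨rfl, by simp; omega⟩]
    · exact (downLabel_eq (p := (p.1, (⟨p.2.val - 1, by omega⟩ : Fin m))) (q := p) rfl
        (Nat.sub_add_cancel hp)).symm
    rintro u - hu
    exact if_neg fun ⟨h1, h2⟩ => hu (Prod.ext h1 (Fin.ext (by simp; omega)))
  · rw [downLabel, dif_neg (by omega)]
    exact sum_eq_zero fun u _ => if_neg (by omega)

theorem sum_ite_up_eq_downLabel :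
    ∑ u, (if p.1 = u.1 ∧ p.2.val + 1 = u.2.val then x s(p, u) else 0) =
      downLabel x p.1 (p.2 + 1) := by
  by_cases hp : p.2.val + 1 < m
  · rw [sum_eq_single_of_mem (p.1, ⟨p.2.val + 1, hp⟩) (mem_univ _), if_pos ⟨rfl, rfl⟩]
    · exact (downLabel_eq (p := p) (q := (p.1, ⟨p.2.val + 1, hp⟩)) rfl rfl).symm
    rintro u - hu
    exact if_neg fun ⟨h1, h2⟩ => hu (Prod.ext h1.symm (Fin.ext (by simp; omega)))
  · rw [downLabel, dif_neg (by omega)]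
    exact sum_eq_zero fun u _ => if_neg (by omega)

end Sums

theorem sum_incident_gridGraph [AddCommMonoid M] {x : Sym2 (Fin n × Fin m) → M}
    (hx : ∀ e ∉ (gridGraph m n).edgeSet, x e = 0) (p : Fin n × Fin m) :
    ∑ e ∈ univ.filter (fun e => p ∈ e), x e =
      leftLabel x p.1 p.2 + leftLabel x (p.1 + 1) p.2 + downLabel x p.1 p.2 +
        downLabel x p.1 (p.2 + 1) := by
  have hsplit (u : Fin n × Fin m) : x s(p, u) =
      ((if u.2 = p.2 ∧ u.1.val + 1 = p.1.val then x s(u, p) else 0) +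
        if p.2 = u.2 ∧ p.1.val + 1 = u.1.val then x s(p, u) else 0) +
      ((if u.1 = p.1 ∧ u.2.val + 1 = p.2.val then x s(u, p) else 0) +
        if p.1 = u.1 ∧ p.2.val + 1 = u.2.val then x s(p, u) else 0) := by
    obtain ⟨⟨a, ha⟩, b, hb⟩ := p
    obtain ⟨⟨c, hc⟩, d, hd⟩ := u
    have hadj := gridGraph_adj (p := (⟨a, ha⟩, ⟨b, hb⟩)) (q := (⟨c, hc⟩, ⟨d, hd⟩))
    simp only [Fin.mk.injEq] at hadj ⊢
    by_cases hpu : (gridGraph m n).Adj (⟨a, ha⟩, ⟨b, hb⟩) (⟨c, hc⟩, ⟨d, hd⟩)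
    · rw [hadj] at hpu
      split_ifs <;> first | omega | simp [Sym2.eq_swap]
    · rw [hx _ hpu]
      rw [hadj] at hpu
      split_ifs <;> first | omega | simp
  rw [SimpleGraph.sum_filter_mem_eq_sum_mk, sum_congr rfl fun u _ => hsplit u]
  simp only [sum_add_distrib, sum_ite_left_eq_leftLabel, sum_ite_right_eq_leftLabel,
    sum_ite_down_eq_downLabel, sum_ite_up_eq_downLabel, add_assoc]

end GridLabels

section GridLabellings

variable {m n : ℕ} {M : Type*} [Zero M]

theorem eq_of_leftLabel_eq_of_downLabel_eq {x y : Sym2 (Fin n × Fin m) → M}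
    (hx : ∀ e ∉ (gridGraph m n).edgeSet, x e = 0)
    (hy : ∀ e ∉ (gridGraph m n).edgeSet, y e = 0)
    (hleft : ∀ i j, 0 < i → i < n → j < m → leftLabel x i j = leftLabel y i j)
    (hdown : ∀ i j, i < n → 0 < j → j < m → downLabel x i j = downLabel y i j) : x = y := by
  funext e
  induction e using Sym2.ind with
  | _ p q =>
    by_cases hpq : (gridGraph m n).Adj p q
    · rw [gridGraph_adj] at hpq
      rcases hpq with ⟨h2, h1 | h1⟩ | ⟨h1, h2 | h2⟩
      · rw [← leftLabel_eq (x := x) h2 h1, ← leftLabel_eq (x := y) h2 h1]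
        exact hleft _ _ (by omega) q.1.2 q.2.2
      · rw [Sym2.eq_swap, ← leftLabel_eq (x := x) h2.symm h1,
          ← leftLabel_eq (x := y) h2.symm h1]
        exact hleft _ _ (by omega) p.1.2 p.2.2
      · rw [← downLabel_eq (x := x) h1 h2, ← downLabel_eq (x := y) h1 h2]
        exact hdown _ _ q.1.2 (by omega) q.2.2
      · rw [Sym2.eq_swap, ← downLabel_eq (x := x) h1.symm h2,
          ← downLabel_eq (x := y) h1.symm h2]
        exact hdown _ _ p.1.2 (by omega) p.2.2
    · rw [hx _ hpq, hy _ hpq]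

theorem leftLabel_pos {R : Type*} [Zero R] [LT R] {x : Sym2 (Fin n × Fin m) → R}
    (hx : ∀ e ∈ (gridGraph m n).edgeSet, 0 < x e) {i j : ℕ} (hi0 : 0 < i) (hi : i < n)
    (hj : j < m) : 0 < leftLabel x i j := by
  rw [leftLabel, dif_pos ⟨hi0, hi, hj⟩]
  exact hx _ (gridGraph_adj.2 (Or.inl ⟨rfl, Or.inl (by simp; omega)⟩))

theorem downLabel_pos {R : Type*} [Zero R] [LT R] {x : Sym2 (Fin n × Fin m) → R}
    (hx : ∀ e ∈ (gridGraph m n).edgeSet, 0 < x e) {i j : ℕ} (hi : i < n) (hj0 : 0 < j)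
    (hj : j < m) : 0 < downLabel x i j := by
  rw [downLabel, dif_pos ⟨hi, hj0, hj⟩]
  exact hx _ (gridGraph_adj.2 (Or.inr ⟨rfl, Or.inl (by simp; omega)⟩))

instance : DecidableRel (gridGraph m n).Adj := fun p q =>
  inferInstanceAs (Decidable (Nat.dist p.1.val q.1.val + Nat.dist p.2.val q.2.val = 1))

def gridLabelling (h v : ℕ → ℕ → M) : Sym2 (Fin n × Fin m) → M :=
  Sym2.lift ⟨fun p q => if (gridGraph m n).Adj p q then
      if p.2 = q.2 then h (max p.1 q.1) p.2 else v p.1 (max p.2 q.2)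
    else 0, fun p q => by
      dsimp only
      by_cases hadj : (gridGraph m n).Adj p q
      · rw [if_pos hadj, if_pos hadj.symm]
        by_cases h2 : p.2 = q.2
        · rw [if_pos h2, if_pos h2.symm, h2, max_comm]
        · have h1 : p.1 = q.1 := by rw [gridGraph_adj] at hadj; tauto
          rw [if_neg h2, if_neg (Ne.symm h2), h1, max_comm]
      · rw [if_neg hadj, if_neg fun h => hadj h.symm]⟩

variable {h v : ℕ → ℕ → M}

theorem gridLabelling_mk (p q : Fin n × Fin m) :
    gridLabelling h v s(p, q) = if (gridGraph m n).Adj p q then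
      if p.2 = q.2 then h (max p.1 q.1) p.2 else v p.1 (max p.2 q.2)
    else 0 :=
  Sym2.lift_mk _ p q

theorem gridLabelling_eq_zero {e : Sym2 (Fin n × Fin m)} (he : e ∉ (gridGraph m n).edgeSet) :
    gridLabelling h v e = 0 := by
  induction e using Sym2.ind with
  | _ p q => exact (gridLabelling_mk p q).trans (if_neg he)

theorem leftLabel_gridLabelling (i j : ℕ) :
    leftLabel (gridLabelling (m := m) (n := n) h v) i j =
      if 0 < i ∧ i < n ∧ j < m then h i j else 0 := by
  unfold leftLabel
  split_ifs with hij
  · rw [gridLabelling_mk]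
    simp only [gridGraph_adj, Fin.ext_iff, true_and]
    rw [if_pos (by omega), if_pos trivial, max_eq_right (Nat.sub_le i 1)]
  · rfl

theorem downLabel_gridLabelling (i j : ℕ) :
    downLabel (gridLabelling (m := m) (n := n) h v) i j =
      if i < n ∧ 0 < j ∧ j < m then v i j else 0 := by
  unfold downLabel
  split_ifs with hij
  · rw [gridLabelling_mk]
    simp only [gridGraph_adj, Fin.ext_iff, true_and]
    rw [if_pos (by omega), if_neg (by omega), max_eq_right (Nat.sub_le j 1)]
  · rfl

theorem gridLabelling_pos {R : Type*} [Zero R] [LT R] {h v : ℕ → ℕ → R}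
    (hh : ∀ i j, 0 < h i j) (hv : ∀ i j, 0 < v i j) {e : Sym2 (Fin n × Fin m)}
    (he : e ∈ (gridGraph m n).edgeSet) :
    0 < gridLabelling h v e := by
  induction e using Sym2.ind with
  | _ p q =>
    rw [gridLabelling_mk, if_pos ((gridGraph m n).mem_edgeSet.1 he)]
    split_ifs
    exacts [hh _ _, hv _ _]

end GridLabellings

def gridColoring (m n : ℕ) : (gridGraph m n).Coloring Bool :=
  SimpleGraph.Coloring.mk (fun p => decide ((p.1.val + p.2.val) % 2 = 1)) fun hpq => by
    rw [gridGraph_adj] at hpq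
    simp only [Fin.ext_iff] at hpq
    simp only [ne_eq, decide_eq_decide]
    omega

def gridColorClassEquiv {m n : ℕ} (hn : Even n) :
    (gridColoring m n).colorClass false ≃ (gridColoring m n).colorClass true :=
  (Fin.revPerm.prodCongr (Equiv.refl (Fin m))).subtypeEquiv fun p => by
    obtain ⟨k, rfl⟩ := hn
    simp only [SimpleGraph.Coloring.colorClass, gridColoring, Set.mem_ofPred_eq,
      SimpleGraph.Coloring.mk, RelHom.coeFn_mk, Equiv.prodCongr_apply, Prod.map,
      Fin.revPerm_apply, Fin.val_rev, Equiv.refl_apply, decide_eq_false_iff_not,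
      decide_eq_true_eq]
    have := p.1.2
    omega

section ThreeRows

variable {n : ℕ} {t : ℤ} {x : Sym2 (Fin n × Fin 3) → ℤ}

theorem column_sums_of_isMagic (hx : (gridGraph 3 n).IsMagic t x) {i : ℕ} (hi : i < n) :
    leftLabel x i 0 + leftLabel x (i + 1) 0 + downLabel x i 1 = t ∧
      leftLabel x i 1 + leftLabel x (i + 1) 1 + downLabel x i 1 + downLabel x i 2 = t ∧
      leftLabel x i 2 + leftLabel x (i + 1) 2 + downLabel x i 2 = t := by
  have h (j : Fin 3) := (sum_incident_gridGraph hx.1 (⟨i, hi⟩, j)).symm.trans (hx.2 _)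
  have h0 := h 0
  have h1 := h 1
  have h2 := h 2
  simp only [Fin.val_zero, Fin.val_one, Fin.val_two, zero_add, Nat.reduceAdd,
    downLabel_eq_zero (x := x) (i := i) (j := 0) (by omega),
    downLabel_eq_zero (x := x) (i := i) (j := 3) (by omega), add_zero] at h0 h1 h2
  exact ⟨h0, h1, h2⟩

theorem column_labels_pos (hx : ∀ e ∈ (gridGraph 3 n).edgeSet, 0 < x e) {i : ℕ} (hi : i + 1 < n) :
    0 < leftLabel x (i + 1) 0 ∧ 0 < leftLabel x (i + 1) 1 ∧ 0 < leftLabel x (i + 1) 2 ∧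
      0 < downLabel x i 1 ∧ 0 < downLabel x i 2 :=
  ⟨leftLabel_pos hx i.succ_pos hi (by norm_num), leftLabel_pos hx i.succ_pos hi (by norm_num),
    leftLabel_pos hx i.succ_pos hi (by norm_num), downLabel_pos hx (by omega) one_pos (by norm_num),
    downLabel_pos hx (by omega) two_pos (by norm_num)⟩

theorem five_le_of_isPositiveMagic (hn : 3 ≤ n) (hx : (gridGraph 3 n).IsPositiveMagic t x) :
    5 ≤ t := by
  obtain ⟨c00, c01, c02⟩ := column_sums_of_isMagic hx.1 (i := 0) (by omega)
  obtain ⟨c10, c11, c12⟩ := column_sums_of_isMagic hx.1 (i := 1) (by omega)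
  have p0 := column_labels_pos hx.2 (i := 0) (by omega)
  have p1 := column_labels_pos hx.2 (i := 1) (by omega)
  have hl0 (j : ℕ) : leftLabel x 0 j = 0 := leftLabel_eq_zero (by omega)
  simp only [hl0, zero_add, Nat.reduceAdd] at c00 c01 c02 c10 c11 c12 p0 p1
  omega

def starLeft (i j : ℕ) : ℤ :=
  if i % 2 = 1 then (if j = 1 then 1 else 3) else (if j = 1 then 2 else 1)

def starDown (n i : ℕ) : ℤ :=
  if i = 0 ∨ i + 1 = n then 2 else 1

def gridStar (n : ℕ) : Sym2 (Fin n × Fin 3) → ℤ :=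
  gridLabelling starLeft fun i _ => starDown n i

theorem isPositiveMagic_gridStar (hn : Even n) :
    (gridGraph 3 n).IsPositiveMagic 5 (gridStar n) := by
  refine ⟨⟨fun e he => gridLabelling_eq_zero he, fun ⟨⟨i, hi⟩, j, hj⟩ => ?_⟩,
    fun e he => gridLabelling_pos (fun i j => ?_) (fun i j => ?_) he⟩
  · rw [gridStar, sum_incident_gridGraph fun e he => gridLabelling_eq_zero he]
    simp only [leftLabel_gridLabelling, downLabel_gridLabelling, starLeft, starDown]
    obtain ⟨k, rfl⟩ := hn
    interval_cases j <;> norm_num <;> split_ifs <;> omega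
  · simp only [starLeft]
    split_ifs <;> norm_num
  · simp only [starDown]
    split_ifs <;> norm_num

theorem leftLabel_downLabel_eq_star (hn : 3 ≤ n) (hx : (gridGraph 3 n).IsPositiveMagic 5 x) :
    ∀ i, i + 1 < n →
      leftLabel x (i + 1) 0 = starLeft (i + 1) 0 ∧ leftLabel x (i + 1) 1 = starLeft (i + 1) 1 ∧
        leftLabel x (i + 1) 2 = starLeft (i + 1) 2 ∧ downLabel x i 1 = starDown n i ∧
        downLabel x i 2 = starDown n i := by
  intro i
  induction i with
  | zero =>
    intro _
    obtain ⟨c00, c01, c02⟩ := column_sums_of_isMagic hx.1 (i := 0) (by omega)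
    obtain ⟨c10, c11, c12⟩ := column_sums_of_isMagic hx.1 (i := 1) (by omega)
    have p0 := column_labels_pos hx.2 (i := 0) (by omega)
    have p1 := column_labels_pos hx.2 (i := 1) (by omega)
    have hl0 (j : ℕ) : leftLabel x 0 j = 0 := leftLabel_eq_zero (by omega)
    simp only [hl0, zero_add, Nat.reduceAdd] at c00 c01 c02 c10 c11 c12 p0 p1
    simp only [starLeft, starDown]
    norm_num
    omega
  | succ i ih =>
    intro hi
    obtain ⟨a0, a1, a2, -, -⟩ := ih (by omega)
    obtain ⟨c0, c1, c2⟩ := column_sums_of_isMagic hx.1 (i := i + 1) (by omega)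
    have := column_labels_pos hx.2 hi
    norm_num [starLeft, starDown] at a0 a1 a2 ⊢
    split_ifs at a0 a1 a2 ⊢ <;> omega

theorem downLabel_last_eq_star (hn : 3 ≤ n) (hev : Even n)
    (hx : (gridGraph 3 n).IsPositiveMagic 5 x) :
    downLabel x (n - 1) 1 = starDown n (n - 1) ∧ downLabel x (n - 1) 2 = starDown n (n - 1) := by
  obtain ⟨a0, a1, a2, -, -⟩ := leftLabel_downLabel_eq_star hn hx (n - 2) (by omega)
  obtain ⟨c0, c1, c2⟩ := column_sums_of_isMagic hx.1 (i := n - 1) (by omega)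
  have hln (j : ℕ) : leftLabel x (n - 1 + 1) j = 0 := leftLabel_eq_zero (by omega)
  rw [show n - 2 + 1 = n - 1 by omega] at a0 a1 a2
  simp only [hln, add_zero] at c0 c1 c2
  obtain ⟨k, rfl⟩ := hev
  norm_num [starLeft, starDown] at a0 a1 a2 ⊢
  split_ifs at a0 a1 a2 ⊢ <;> omega

theorem eq_gridStar_of_isPositiveMagic (hn : 3 ≤ n) (hev : Even n)
    (hx : (gridGraph 3 n).IsPositiveMagic 5 x) :
    x = gridStar n := by
  have hstar := leftLabel_downLabel_eq_star hn hx
  refine eq_of_leftLabel_eq_of_downLabel_eq hx.1.1 (fun e he => gridLabelling_eq_zero he)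
    (fun i j hi0 hi hj => ?_) (fun i j hi hj0 hj => ?_)
  · rw [gridStar, leftLabel_gridLabelling, if_pos ⟨hi0, hi, hj⟩]
    obtain ⟨a0, a1, a2, -⟩ := hstar (i - 1) (by omega)
    rw [Nat.sub_add_cancel hi0] at a0 a1 a2
    interval_cases j <;> assumption
  · rw [gridStar, downLabel_gridLabelling, if_pos ⟨hi, hj0, hj⟩]
    by_cases hlast : i + 1 < n
    · obtain ⟨-, -, -, b1, b2⟩ := hstar i hlast
      interval_cases j <;> assumption
    · obtain rfl : i = n - 1 := by omega
      obtain ⟨b1, b2⟩ := downLabel_last_eq_star hn hev hx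
      interval_cases j <;> assumption

end ThreeRows

/-- For even `n ≥ 4`, the dilates `t P(3,n)` for `t = 1, 2, 3, 4`
contain no lattice point in their relative interior, and `5 P(3,n)` contains exactly
one lattice point in its relative interior. -/
theorem grid_three_interior_points (n : ℕ) (hn : 4 ≤ n) (hne : Even n) :
    (∀ t : ℕ, 1 ≤ t → t ≤ 4 → interiorLatticeCount (pmPolytope (gridGraph 3 n)) t = 0) ∧
    interiorLatticeCount (pmPolytope (gridGraph 3 n)) 5 = 1 := by
  have hstar := isPositiveMagic_gridStar hne
  have hu : (gridGraph 3 n).IsPositiveMagic 1 ((1 / 5 : ℝ) • fun e => (gridStar n e : ℝ)) := by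
    simpa using (SimpleGraph.isPositiveMagic_intCast_iff.2 hstar).smul (c := 1 / 5) (by norm_num)
  have hcount (t : ℕ) (ht : 0 < t) :=
    SimpleGraph.interiorLatticeCount_pmPolytope (gridColorClassEquiv hne) hu ht
  refine ⟨fun t ht1 ht4 => ?_, ?_⟩
  · rw [hcount t ht1, Nat.card_eq_zero]
    exact Or.inl ⟨fun ⟨x, hx⟩ => by have := five_le_of_isPositiveMagic (by omega) hx; omega⟩
  · rw [hcount 5 (by norm_num), Nat.card_eq_one_iff_unique]
    exact ⟨⟨fun x y => Subtype.ext ((eq_gridStar_of_isPositiveMagic (by omega) hne x.2).trans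
      (eq_gridStar_of_isPositiveMagic (by omega) hne y.2).symm)⟩, ⟨⟨gridStar n, hstar⟩⟩⟩
end
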